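/- arXiv:1309.7944 — 12 statements merged into one kernel-verified Lean document; each statement's English description precedes it below -/
import Mathlib

section
/- If n ≥ 1 and x_i = −cos(iπ/n) for i = 0,…,n are the Chebyshev points of the second kind, then the barycentric quantities λ_i(x) = ∏_{j≠i} 1/(x_i − x_j) satisfy λ_0(x) = (−1)^n 2^{n−2}/n, λ_n(x) = 2^{n−2}/n, and λ_i(x) = (−1)^{n−i} 2^{n−1}/n for every i with 0 < i < n. -/
/-!
With `c k = 2 sin (kπ / 2n)`, the identity `cos b - cos a = 2 sin ((a + b) / 2) sin ((a - b) / 2)`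
gives `2 (x_i - x_j) = c (i + j) * c (i - j)`. Hence `2 ^ n ∏_{j ≠ i} (x_i - x_j)` is, up to sign,
the product of `c` over the index windows `[i, n + i] \ {2i}`, `[1, i]` and `[1, n - i]`. The
symmetry `c (2n - k) = c k` regroups these into `(c 1 ⋯ c n) (c 1 ⋯ c (n - 1)) = c 1 ⋯ c (2n - 1)`,
which is `|∏ (1 - ζ ^ k)| = 2n` over the nontrivial `2n`-th roots of unity `ζ ^ k`. At an endpoint
the product is `(c 1 ⋯ c n) ^ 2` with `c n = 2`; at an interior node the missing index `2i` is
accounted for by `c (2i) = c i * c (n - i)`.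
-/

open Finset Real Polynomial.Chebyshev

theorem prod_range_two_mul_sin (m : ℕ) :
    ∏ k ∈ range m, 2 * sin ((k + 1) * π / (m + 1)) = m + 1 := by
  have hμ := Complex.isPrimitiveRoot_exp (m + 1) m.succ_ne_zero
  have h := congrArg norm hμ.prod_one_sub_pow_eq_order
  rw [norm_prod] at h
  convert h using 1
  · refine prod_congr rfl fun k hk => ?_
    have hk : (k + 1 : ℝ) ≤ m + 1 := by exact_mod_cast Nat.succ_le_succ (mem_range.1 hk).le
    rw [norm_sub_rev, ← Complex.exp_nat_mul,
      show ((k + 1 : ℕ) : ℂ) * (2 * π * Complex.I / (m + 1 : ℕ))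
        = Complex.I * ((2 * ((k + 1) * π / (m + 1)) : ℝ) : ℂ) by push_cast; ring,
      Complex.norm_exp_I_mul_ofReal_sub_one, mul_div_cancel_left₀ _ two_ne_zero,
      Real.norm_eq_abs, abs_of_nonneg]
    refine mul_nonneg zero_le_two (sin_nonneg_of_nonneg_of_le_pi (by positivity) ?_)
    rw [div_le_iff₀ (by positivity)]
    nlinarith [pi_pos]
  · norm_cast

/-- The length of the chord between `1` and `exp (i a π / n)` on the unit circle. -/
noncomputable def chord (n : ℕ) (a : ℝ) : ℝ := 2 * sin (a * π / (2 * n))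

section

variable {n : ℕ}

theorem chord_neg (a : ℝ) : chord n (-a) = -chord n a := by
  simp only [chord, neg_mul, neg_div, sin_neg, mul_neg]

theorem chord_self (hn : n ≠ 0) : chord n n = 2 := by
  rw [chord, show (n : ℝ) * π / (2 * n) = π / 2 by field_simp, sin_pi_div_two, mul_one]

theorem chord_two_mul_sub (hn : n ≠ 0) (a : ℝ) : chord n (2 * n - a) = chord n a := by
  rw [chord, chord, show (2 * n - a) * π / (2 * n) = π - a * π / (2 * n) by field_simp,
    sin_pi_sub]

theorem chord_two_mul (hn : n ≠ 0) (a : ℝ) : chord n (2 * a) = chord n a * chord n (n - a) := by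
  rw [chord, chord, chord, show (n - a) * π / (2 * n) = π / 2 - a * π / (2 * n) by field_simp,
    sin_pi_div_two_sub, show 2 * a * π / (2 * n) = 2 * (a * π / (2 * n)) by ring, sin_two_mul]
  ring

theorem chord_pos {a : ℝ} (ha₀ : 0 < a) (ha : a < 2 * n) : 0 < chord n a := by
  have hn : (0 : ℝ) < n := by linarith
  refine mul_pos two_pos (sin_pos_of_pos_of_lt_pi (by positivity) ?_)
  rw [div_lt_iff₀ (by positivity)]
  nlinarith [pi_pos]

theorem node_sub_node (i j : ℕ) :
    node n j - node n i = chord n (i + j) * chord n (i - j) / 2 := by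
  rw [node, node, cos_sub_cos, chord, chord,
    show (j * π / n + i * π / n) / 2 = (i + j) * π / (2 * n) by ring,
    show (j * π / n - i * π / n) / 2 = -((i - j) * π / (2 * n)) by ring, sin_neg]
  ring

theorem prod_Ico_chord_reflect (hn : n ≠ 0) {a b : ℕ} (hb : b ≤ 2 * n) :
    ∏ k ∈ Ico a b, chord n k = ∏ k ∈ Ico (2 * n + 1 - b) (2 * n + 1 - a), chord n k := by
  rw [← prod_Ico_reflect (fun k : ℕ => chord n k) a (Nat.le_succ_of_le hb)]
  refine prod_congr rfl fun k hk => ?_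
  rw [Nat.cast_sub (by have := (mem_Ico.1 hk).2; omega), Nat.cast_mul, Nat.cast_ofNat,
    chord_two_mul_sub hn]

theorem prod_range_chord_sub (i : ℕ) :
    ∏ j ∈ range i, chord n (i - j) = ∏ k ∈ Ico 1 (i + 1), chord n k := by
  have h := prod_Ico_reflect (fun k : ℕ => chord n k) 0 (Nat.le_succ i)
  rw [Nat.add_sub_cancel_left, Nat.sub_zero] at h
  rw [range_eq_Ico, ← h]
  refine prod_congr rfl fun j hj => ?_
  rw [Nat.cast_sub (mem_Ico.1 hj).2.le]

theorem prod_Ico_one_two_mul_chord (hn : n ≠ 0) : ∏ k ∈ Ico 1 (2 * n), chord n k = 2 * n := by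
  obtain ⟨m, rfl⟩ := Nat.exists_eq_succ_of_ne_zero hn
  rw [prod_Ico_eq_prod_range, show 2 * (m + 1) - 1 = 2 * m + 1 by omega]
  convert prod_range_two_mul_sin (2 * m + 1) using 1
  · refine prod_congr rfl fun k _ => ?_
    rw [chord]
    push_cast
    ring_nf
  · push_cast
    ring

theorem prod_Ico_chord_mul_prod_Ico_chord (hn : n ≠ 0) :
    (∏ k ∈ Ico 1 (n + 1), chord n k) * ∏ k ∈ Ico 1 n, chord n k = 2 * n := by
  rw [← prod_Ico_one_two_mul_chord hn,
    ← prod_Ico_consecutive _ (Nat.le_add_left 1 n) (show n + 1 ≤ 2 * n by omega),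
    prod_Ico_chord_reflect hn (a := n + 1) le_rfl,
    show 2 * n + 1 - 2 * n = 1 by omega, show 2 * n + 1 - (n + 1) = n by omega]

theorem sq_prod_Ico_chord (hn : n ≠ 0) : (∏ k ∈ Ico 1 (n + 1), chord n k) ^ 2 = 4 * n := by
  have h := prod_Ico_chord_mul_prod_Ico_chord hn
  rw [prod_Ico_succ_top (Nat.one_le_iff_ne_zero.2 hn), chord_self hn] at h ⊢
  linear_combination 2 * h

theorem prod_erase_chord_sub {i : ℕ} (hi : i ≤ n) :
    ∏ j ∈ (range (n + 1)).erase i, chord n (i - j)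
      = (-1) ^ (n - i) * (∏ k ∈ Ico 1 (i + 1), chord n k) * ∏ k ∈ Ico 1 (n - i + 1), chord n k := by
  have hsplit : (range (n + 1)).erase i = range i ∪ Ico (i + 1) (n + 1) := by
    ext j; simp only [mem_erase, mem_range, mem_union, mem_Ico]; omega
  have hdisj : Disjoint (range i) (Ico (i + 1) (n + 1)) := by
    simp only [disjoint_left, mem_range, mem_Ico]; omega
  have hright : ∏ j ∈ Ico (i + 1) (n + 1), chord n (i - j)
      = (-1) ^ (n - i) * ∏ k ∈ Ico 1 (n - i + 1), chord n k := by
    rw [← prod_Ico_add_right_sub_eq (f := fun k : ℕ => chord n k) 1 (n - i + 1) i,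
      show 1 + i = i + 1 by omega, show n - i + 1 + i = n + 1 by omega,
      show n - i = n + 1 - (i + 1) by omega, ← Nat.card_Ico, ← prod_const, ← prod_mul_distrib]
    refine prod_congr rfl fun j hj => ?_
    rw [Nat.cast_sub (by have := (mem_Ico.1 hj).1; omega), neg_one_mul, ← chord_neg, neg_sub]
  rw [hsplit, prod_union hdisj, prod_range_chord_sub, hright]
  ring

theorem prod_Ico_chord_window (hn : n ≠ 0) {i : ℕ} (h₀ : 0 < i) (hi : i < n) :
    (∏ k ∈ Ico i (n + i + 1), chord n k) * (∏ k ∈ Ico 1 i, chord n k)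
        * ∏ k ∈ Ico 1 (n - i), chord n k
      = (∏ k ∈ Ico 1 (n + 1), chord n k) * ∏ k ∈ Ico 1 n, chord n k := by
  rw [← prod_Ico_consecutive _ (show i ≤ n + 1 by omega) (show n + 1 ≤ n + i + 1 by omega),
    prod_Ico_chord_reflect hn (show n + i + 1 ≤ 2 * n by omega),
    show 2 * n + 1 - (n + i + 1) = n - i by omega, show 2 * n + 1 - (n + 1) = n by omega,
    ← prod_Ico_consecutive _ (show 1 ≤ i by omega) (show i ≤ n + 1 by omega),
    ← prod_Ico_consecutive (fun k : ℕ => chord n k) (show 1 ≤ n - i by omega)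
      (show n - i ≤ n by omega)]
  ring

noncomputable def chordProd (n i : ℕ) : ℝ :=
  ∏ j ∈ (range (n + 1)).erase i, chord n (i + j) * chord n (i - j)

theorem prod_erase_one_div_node_sub_node {i : ℕ} (hi : i ≤ n) :
    ∏ j ∈ (range (n + 1)).erase i, 1 / (node n j - node n i) = 2 ^ n / chordProd n i := by
  simp_rw [node_sub_node, one_div_div]
  rw [prod_div_distrib, prod_const, card_erase_of_mem (mem_range.2 (Nat.lt_succ_of_le hi)),
    card_range, Nat.succ_sub_one, chordProd]

theorem chordProd_zero (hn : n ≠ 0) : chordProd n 0 = (-1) ^ n * (4 * n) := by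
  have herase : (range (n + 1)).erase 0 = Ico 1 (n + 1) := by
    ext j; simp only [mem_erase, mem_range, mem_Ico]; omega
  have hsign : (-1 : ℝ) ^ n = ∏ _j ∈ Ico 1 (n + 1), (-1) := by
    rw [prod_const, Nat.card_Ico, Nat.add_sub_cancel]
  rw [chordProd, herase, ← sq_prod_Ico_chord hn, ← prod_pow, hsign, ← prod_mul_distrib]
  refine prod_congr rfl fun j _ => ?_
  rw [Nat.cast_zero, zero_add, zero_sub, chord_neg]
  ring

theorem chordProd_self (hn : n ≠ 0) : chordProd n n = 4 * n := by
  rw [chordProd, range_add_one, erase_insert notMem_range_self, ← sq_prod_Ico_chord hn,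
    ← prod_range_chord_sub, ← prod_pow]
  refine prod_congr rfl fun j _ => ?_
  rw [← chord_two_mul_sub hn (n - j)]
  ring_nf

theorem chordProd_of_pos_of_lt {i : ℕ} (h₀ : 0 < i) (hi : i < n) :
    chordProd n i = (-1) ^ (n - i) * (2 * n) := by
  have hn : n ≠ 0 := by omega
  have hdiag : chord n (2 * i) * ∏ j ∈ (range (n + 1)).erase i, chord n (i + j)
      = ∏ k ∈ Ico i (n + i + 1), chord n k := by
    rw [two_mul, mul_prod_erase _ (fun j : ℕ => chord n (i + j)) (mem_range.2 (by omega)),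
      prod_Ico_eq_prod_range, show n + i + 1 - i = n + 1 by omega]
    push_cast
    rfl
  have hpos : 0 < chord n (2 * i) := chord_pos (by positivity) (by norm_cast; omega)
  refine mul_left_cancel₀ hpos.ne' ?_
  calc chord n (2 * i) * chordProd n i
      = (-1) ^ (n - i) * (chord n i * chord n ↑(n - i))
          * ((chord n (2 * i) * ∏ j ∈ (range (n + 1)).erase i, chord n (i + j))
            * (∏ k ∈ Ico 1 i, chord n k) * ∏ k ∈ Ico 1 (n - i), chord n k) := by
        rw [chordProd, prod_mul_distrib, prod_erase_chord_sub hi.le,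
          prod_Ico_succ_top (show 1 ≤ i by omega), prod_Ico_succ_top (show 1 ≤ n - i by omega)]
        ring
    _ = (-1) ^ (n - i) * chord n (2 * i)
          * ((∏ k ∈ Ico 1 (n + 1), chord n k) * ∏ k ∈ Ico 1 n, chord n k) := by
        rw [hdiag, prod_Ico_chord_window hn h₀ hi, chord_two_mul hn, Nat.cast_sub hi.le]
    _ = chord n (2 * i) * ((-1) ^ (n - i) * (2 * n)) := by
        rw [prod_Ico_chord_mul_prod_Ico_chord hn]
        ring

end

/-- Riesz/Salzer formula for the barycentric quantities `λ_i` at the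
Chebyshev points of the second kind `x_i = -cos(iπ/n)`. -/
theorem chebyshev_barycentric_lambda
    (n : ℕ) (hn : 1 ≤ n) (x lam : ℕ → ℝ)
    (hx : ∀ i ≤ n, x i = -Real.cos (i * Real.pi / n))
    (hlam : ∀ i ≤ n, lam i = ∏ j ∈ (Finset.range (n + 1)).erase i, 1 / (x i - x j)) :
    lam 0 = (-1 : ℝ) ^ n * (2 : ℝ) ^ ((n : ℤ) - 2) / n ∧
    lam n = (2 : ℝ) ^ ((n : ℤ) - 2) / n ∧
    ∀ i, 0 < i → i < n → lam i = (-1 : ℝ) ^ (n - i) * (2 : ℝ) ^ ((n : ℤ) - 1) / n := by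
  have hn₀ : n ≠ 0 := Nat.one_le_iff_ne_zero.1 hn
  have hlam' : ∀ i ≤ n, lam i = 2 ^ n / chordProd n i := fun i hi => by
    rw [hlam i hi, ← prod_erase_one_div_node_sub_node hi]
    refine prod_congr rfl fun j hj => ?_
    rw [hx i hi, hx j (Nat.lt_succ_iff.1 (mem_range.1 (mem_of_mem_erase hj))), neg_sub_neg,
      node, node]
  have hpow (k : ℕ) : (2 : ℝ) ^ n = 2 ^ ((n : ℤ) - k) * 2 ^ k := by
    rw [zpow_sub₀ two_ne_zero, zpow_natCast, zpow_natCast, div_mul_cancel₀ _ (by positivity)]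
  refine ⟨?_, ?_, fun i h₀ hi => ?_⟩
  · rw [hlam' 0 n.zero_le, chordProd_zero hn₀, hpow 2]
    field_simp
    rw [← pow_mul, pow_mul', neg_one_sq, one_pow]
    push_cast
    ring
  · rw [hlam' n le_rfl, chordProd_self hn₀, hpow 2]
    push_cast
    field_simp
    ring
  · rw [hlam' i hi.le, chordProd_of_pos_of_lt h₀ hi, hpow 1]
    field_simp
    rw [← pow_mul, pow_mul', neg_one_sq, one_pow]
    push_cast
    ring
end

section
/- If n ≥ 1, x_i = −cos(iπ/n) for i = 0,…,n are the Chebyshev points of the second kind, and γ_0 = 1/2, γ_n = (−1)^n/2, γ_i = (−1)^i for 0 < i < n are the simplified weights, then for every k with 0 ≤ k ≤ n one has (−1)^n · (2^{n−1}/n) · (∏_{i≠k} (x_k − x_i)) · γ_k = 1. -/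
/-!
The points `cos (i π / n)`, `i = 0, …, n`, are exactly the roots of `(X² - 1) U_{n-1}`, a polynomial
of degree `n + 1` with leading coefficient `2^(n-1)`. Hence `∏_{j ≠ k} (x_k - x_j)` is `2^(1-n)` times
the derivative of that polynomial at `x_k`. The derivative is `X U_{n-1} + n T_n`, which equals
`n (-1)^k` at the interior points, where `U_{n-1}` vanishes, and twice that at `±1`; this factor `2`
is what the halved end weights compensate. Passing from `cos` to `-cos` only contributes `(-1)^n`.
-/

open Polynomial Real Finset

namespace Polynomial.Chebyshev

theorem derivative_X_sq_sub_one_mul_U {R : Type*} [CommRing R] (m : ℤ) :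
    derivative ((X ^ 2 - 1) * U R m) = X * U R m + ((m : R[X]) + 1) * T R (m + 1) := by
  rw [add_one_mul_T_eq_poly_in_U, derivative_mul]
  simp only [derivative_sub, derivative_X_pow, derivative_one, Nat.cast_ofNat, C_ofNat]
  ring

theorem eval_U_node_eq_zero {m i : ℕ} (hi₀ : i ≠ 0) (hi : i < m + 1) :
    (U ℝ m).eval (node (m + 1) i) = 0 := by
  have hθ : 0 < (i * π / (m + 1 : ℕ) : ℝ) := by positivity
  have hθπ : (i * π / (m + 1 : ℕ) : ℝ) < π := by
    rw [div_lt_iff₀ (by positivity)]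
    have : (i : ℝ) < (m + 1 : ℕ) := by exact_mod_cast hi
    nlinarith [pi_pos]
  have h := U_real_cos (i * π / (m + 1 : ℕ)) m
  rw [show ((m : ℤ) + 1 : ℝ) * (i * π / (m + 1 : ℕ)) = i * π by push_cast; field_simp,
    sin_nat_mul_pi] at h
  exact (mul_eq_zero.mp h).resolve_right (sin_pos_of_pos_of_lt_pi hθ hθπ).ne'

theorem X_sq_sub_one_mul_U_eq_nodal (m : ℕ) :
    (X ^ 2 - 1) * U ℝ m = Polynomial.C (2 ^ m) * Lagrange.nodal (range (m + 2)) (node (m + 1)) := by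
  have hquad : (X ^ 2 - 1 : ℝ[X]).degree = 2 ∧ (X ^ 2 - 1 : ℝ[X]).leadingCoeff = 1 :=
    ⟨by compute_degree!, by monicity!⟩
  have hdeg : ((X ^ 2 - 1) * U ℝ m).degree = ((m + 2 : ℕ) : WithBot ℕ) := by
    rw [degree_mul, hquad.1, degree_U_natCast]
    norm_cast
    ring
  have hlc : ((X ^ 2 - 1) * U ℝ m).leadingCoeff = 2 ^ m := by
    rw [leadingCoeff_mul, hquad.2, leadingCoeff_U_natCast, one_mul]
  have hnodal : (Polynomial.C (2 ^ m : ℝ) * Lagrange.nodal (range (m + 2)) (node (m + 1))).degree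
      = ((m + 2 : ℕ) : WithBot ℕ) := by
    rw [degree_C_mul (by positivity), Lagrange.degree_nodal, card_range]
  refine eq_of_degree_sub_lt_of_eval_index_eq _ (strictAntiOn_node (m + 1)).injOn ?_ ?_
  · rw [card_range, ← hdeg]
    refine degree_sub_lt_left (hdeg.trans hnodal.symm) (ne_zero_of_coe_le_degree hdeg.ge) ?_
    rw [hlc, leadingCoeff_mul, leadingCoeff_C, Lagrange.nodal_monic.leadingCoeff, mul_one]
  · intro i hi
    rw [eval_C_mul, Lagrange.eval_nodal_at_node hi, mul_zero, eval_mul]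
    rcases Nat.eq_zero_or_pos i with rfl | hi₀
    · simp [node_eq_one]
    rcases Nat.lt_succ_iff_lt_or_eq.mp (mem_range.mp hi) with hlt | rfl
    · rw [eval_U_node_eq_zero hi₀.ne' hlt, mul_zero]
    · simp [node_eq_neg_one]

theorem two_pow_mul_prod_node_sub_node (m : ℕ) {k : ℕ} (hk : k ≤ m + 1) :
    2 ^ m * ∏ j ∈ (range (m + 2)).erase k, (node (m + 1) k - node (m + 1) j) =
      node (m + 1) k * (U ℝ m).eval (node (m + 1) k) + (m + 1) * (-1) ^ k := by
  have hk' : k ∈ range (m + 2) := mem_range.mpr (by omega)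
  have hT : (T ℝ ((m : ℤ) + 1)).eval (node (m + 1) k) = (-1) ^ k := by
    exact_mod_cast eval_T_real_node (n := m + 1) (mem_Iic.mpr hk)
  rw [← Lagrange.eval_nodal, ← Lagrange.eval_nodal_derivative_eval_node_eq hk', ← eval_C_mul,
    ← derivative_C_mul, ← X_sq_sub_one_mul_U_eq_nodal, derivative_X_sq_sub_one_mul_U]
  simp only [eval_add, eval_mul, eval_X, hT, eval_natCast, eval_one, Int.cast_natCast]

theorem two_pow_mul_prod_node_zero_sub_node (m : ℕ) :
    2 ^ m * ∏ j ∈ (range (m + 2)).erase 0, (node (m + 1) 0 - node (m + 1) j) = 2 * (m + 1) := by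
  rw [two_pow_mul_prod_node_sub_node m (Nat.zero_le _), node_eq_one, U_eval_one, pow_zero]
  push_cast
  ring

theorem two_pow_mul_prod_node_last_sub_node (m : ℕ) :
    2 ^ m * ∏ j ∈ (range (m + 2)).erase (m + 1), (node (m + 1) (m + 1) - node (m + 1) j) =
      2 * (m + 1) * (-1) ^ (m + 1) := by
  rw [two_pow_mul_prod_node_sub_node m le_rfl, node_eq_neg_one (Nat.succ_ne_zero m),
    U_eval_neg_one, Int.coe_negOnePow_natCast]
  push_cast
  ring

theorem two_pow_mul_prod_node_sub_node_of_ne_zero_of_lt (m : ℕ) {k : ℕ} (hk₀ : k ≠ 0)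
    (hk : k < m + 1) :
    2 ^ m * ∏ j ∈ (range (m + 2)).erase k, (node (m + 1) k - node (m + 1) j) =
      (m + 1) * (-1) ^ k := by
  rw [two_pow_mul_prod_node_sub_node m hk.le, eval_U_node_eq_zero hk₀ hk, mul_zero, zero_add]

end Polynomial.Chebyshev

open Polynomial.Chebyshev

/-- For the Chebyshev points of the second kind and the simplified weights `γ`,
`(-1)^n · (2^{n-1}/n) · ∏_{i≠k}(x_k - x_i) · γ_k = 1` for every `k ≤ n`. -/
theorem chebyshev_simplified_weights_normalization
    (n : ℕ) (hn : 1 ≤ n) (x γ : ℕ → ℝ)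
    (hx : ∀ i ≤ n, x i = -Real.cos (i * Real.pi / n))
    (hγ0 : γ 0 = 1 / 2) (hγn : γ n = (-1 : ℝ) ^ n / 2)
    (hγ : ∀ i, 0 < i → i < n → γ i = (-1 : ℝ) ^ i) :
    ∀ k ≤ n,
      (-1 : ℝ) ^ n * ((2 : ℝ) ^ ((n : ℤ) - 1) / n) *
        (∏ i ∈ (Finset.range (n + 1)).erase k, (x k - x i)) * γ k = 1 := by
  intro k hk
  obtain ⟨m, rfl⟩ : ∃ m, n = m + 1 := ⟨n - 1, by omega⟩
  have hsq : ∀ j : ℕ, (-1 : ℝ) ^ j * (-1) ^ j = 1 := fun j => by rw [← mul_pow]; norm_num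
  have hprod : ∏ i ∈ (range (m + 2)).erase k, (x k - x i) =
      (-1) ^ (m + 1) * ∏ i ∈ (range (m + 2)).erase k, (node (m + 1) k - node (m + 1) i) := by
    have hnode : ∀ i ≤ m + 1, x i = -node (m + 1) i := hx
    rw [prod_congr rfl fun i hi => by
        rw [hnode k hk, hnode i (Nat.lt_succ_iff.mp (mem_range.mp (mem_of_mem_erase hi))),
          neg_sub_neg, ← neg_sub],
      prod_neg, card_erase_of_mem (mem_range.mpr (by omega)), card_range]
    rfl
  have hzpow : (2 : ℝ) ^ (((m + 1 : ℕ) : ℤ) - 1) = 2 ^ m := by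
    push_cast
    rw [add_sub_cancel_right, zpow_natCast]
  suffices hweighted : 2 ^ m * (∏ i ∈ (range (m + 2)).erase k,
      (node (m + 1) k - node (m + 1) i)) * γ k = m + 1 by
    rw [hzpow, hprod]
    calc _ = ((-1) ^ (m + 1) * (-1) ^ (m + 1)) * (2 ^ m * (∏ i ∈ (range (m + 2)).erase k,
          (node (m + 1) k - node (m + 1) i)) * γ k) / (m + 1 : ℕ) := by ring
      _ = 1 := by rw [hsq, hweighted]; field_simp; push_cast; ring
  rcases Nat.eq_zero_or_pos k with rfl | hk₀
  · rw [two_pow_mul_prod_node_zero_sub_node, hγ0]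
    ring
  rcases Nat.lt_succ_iff_lt_or_eq.mp (Nat.lt_succ_of_le hk) with hlt | rfl
  · rw [two_pow_mul_prod_node_sub_node_of_ne_zero_of_lt m hk₀.ne' hlt, hγ k hk₀ hlt, mul_assoc, hsq,
      mul_one]
  · rw [two_pow_mul_prod_node_last_sub_node, hγn]
    linear_combination (m + 1 : ℝ) * hsq (m + 1)
end

section
/- Let n = 2l be even with n ≥ 2, let 0 ≤ k < n with k odd, and let t ∈ (x_k, x_{k+1}). Then q(t) = −(β + Σ_{i=1}^{l−1} ξ_{2i+1} + ω). -/
/-!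
Writing `g i = 1 / (t - x i)`, the interior weights alternate, so after the first interior term
they pair up as `g (2i) - g (2i+1) = -ξ_{2i+1}`. The two halved end weights give `α` and `-ω`,
and the leftover `α - g 1` is `-β`.
-/

open Finset

theorem sum_Ico_one_two_mul_neg_one_pow_mul {R : Type*} [CommRing R] (g : ℕ → R) (m : ℕ) :
    ∑ i ∈ Ico 1 (2 * (m + 1)), (-1 : R) ^ i * g i
      = -g 1 + ∑ i ∈ Icc 1 m, (g (2 * i) - g (2 * i + 1)) := by
  induction m with
  | zero => simp
  | succ m ih =>
    rw [show 2 * (m + 1 + 1) = 2 * (m + 1) + 1 + 1 by ring,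
      sum_Ico_succ_top (by omega), sum_Ico_succ_top (by omega), ih,
      sum_Icc_succ_top (by omega), pow_succ, pow_mul]
    ring

theorem ne_of_mem_Ioo_of_lt_succ {α : Type*} [Preorder α] {x : ℕ → α} {n k j : ℕ}
    (hmono : ∀ i < n, x i < x (i + 1)) (hk : k < n) (hj : j ≤ n) {t : α}
    (ht : t ∈ Set.Ioo (x k) (x (k + 1))) : t ≠ x j := by
  have hx : MonotoneOn x (Set.Iic n) := (strictMonoOn_Iic_of_lt_succ hmono).monotoneOn
  rcases le_or_gt j k with hjk | hkj
  · exact (lt_of_le_of_lt (hx (hjk.trans hk.le) hk.le hjk) ht.1).ne'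
  · exact (lt_of_lt_of_le ht.2 (hx (Set.mem_Iic.2 hk) hj hkj)).ne

theorem div_mul_eq_inv_sub_inv {K : Type*} [Field K] {t a b : K} (ha : t - a ≠ 0)
    (hb : t - b ≠ 0) : (a - b) / ((t - a) * (t - b)) = (t - a)⁻¹ - (t - b)⁻¹ := by
  rw [inv_sub_inv ha hb, sub_sub_sub_cancel_left]

theorem endpoint_div_eq_inv_sub {K : Type*} [Field K] [NeZero (2 : K)] {t a : K} (ha : t - a ≠ 0)
    (ht : 1 + t ≠ 0) :
    (2 + a + t) / (2 * (t - a) * (1 + t)) = (t - a)⁻¹ - 1 / (2 * (1 + t)) := by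
  field_simp
  ring

theorem denominator_decomposition_even_odd_general
    (n l k : ℕ) (hl : n = 2 * l) (hk : k < n)
    (x γ : ℕ → ℝ)
    (hx0 : x 0 = -1) (hxn : x n = 1)
    (hmono : ∀ i < n, x i < x (i + 1))
    (hγ0 : γ 0 = 1 / 2) (hγn : γ n = (-1 : ℝ) ^ n / 2)
    (hγ : ∀ i, 0 < i → i < n → γ i = (-1 : ℝ) ^ i)
    (t : ℝ) (ht : t ∈ Set.Ioo (x k) (x (k + 1))) :
    ∑ i ∈ Finset.range (n + 1), γ i / (t - x i)
      = -(((2 + x 1) + t) / (2 * (t - x 1) * (1 + t))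
          + (∑ i ∈ Finset.Icc 1 (l - 1),
              (x (2 * i + 1) - x (2 * i)) / ((t - x (2 * i + 1)) * (t - x (2 * i))))
          + 1 / (2 * (1 - t))) := by
  have hne : ∀ j ≤ n, t - x j ≠ 0 := fun j hj =>
    sub_ne_zero.2 (ne_of_mem_Ioo_of_lt_succ hmono hk hj ht)
  have hn : n = 2 * (l - 1 + 1) := by omega
  have hinterior :
      ∑ i ∈ Ico 1 n, γ i / (t - x i) = ∑ i ∈ Ico 1 n, (-1 : ℝ) ^ i * (t - x i)⁻¹ :=
    sum_congr rfl fun i hi => by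
      rw [hγ i (mem_Ico.1 hi).1 (mem_Ico.1 hi).2, div_eq_mul_inv]
  have hξ : ∑ i ∈ Icc 1 (l - 1),
      (x (2 * i + 1) - x (2 * i)) / ((t - x (2 * i + 1)) * (t - x (2 * i)))
      = ∑ i ∈ Icc 1 (l - 1), ((t - x (2 * i + 1))⁻¹ - (t - x (2 * i))⁻¹) :=
    sum_congr rfl fun i hi => div_mul_eq_inv_sub_inv (hne _ (by grind)) (hne _ (by grind))
  have hβ := endpoint_div_eq_inv_sub (hne 1 (by omega))
    (by simpa [hx0, add_comm] using hne 0 (by omega))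
  rw [sum_range_succ, range_eq_Ico, sum_eq_sum_Ico_succ_bot (by omega), hinterior, hn,
    sum_Ico_one_two_mul_neg_one_pow_mul, ← hn, hξ, hβ, hγ0, hγn, hx0, hxn,
    (show Even n from ⟨l, by omega⟩).neg_one_pow, sum_sub_distrib, sum_sub_distrib]
  have ht1 : t - 1 ≠ 0 := hxn ▸ hne n le_rfl
  have h1t : 1 - t ≠ 0 := by rwa [← neg_sub, neg_ne_zero]
  field_simp
  ring

/-- Decomposition of the denominator `q(t)` of the second barycentric formula:
case `n = 2l` even, `k` odd, `t ∈ (x_k, x_{k+1})`: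
`q(t) = -(β + Σ_{i=1}^{l-1} ξ_{2i+1} + ω)`. -/
theorem denominator_decomposition_even_odd
    (n l k : ℕ) (hn : 2 ≤ n) (hl : n = 2 * l) (hk : k < n) (hko : Odd k)
    (x γ : ℕ → ℝ)
    (hx0 : x 0 = -1) (hxn : x n = 1)
    (hmono : ∀ i < n, x i < x (i + 1))
    (hγ0 : γ 0 = 1 / 2) (hγn : γ n = (-1 : ℝ) ^ n / 2)
    (hγ : ∀ i, 0 < i → i < n → γ i = (-1 : ℝ) ^ i)
    (t : ℝ) (ht : t ∈ Set.Ioo (x k) (x (k + 1))) :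
    ∑ i ∈ Finset.range (n + 1), γ i / (t - x i)
      = -(((2 + x 1) + t) / (2 * (t - x 1) * (1 + t))
          + (∑ i ∈ Finset.Icc 1 (l - 1),
              (x (2 * i + 1) - x (2 * i)) / ((t - x (2 * i + 1)) * (t - x (2 * i))))
          + 1 / (2 * (1 - t))) :=
  denominator_decomposition_even_odd_general n l k hl hk x γ hx0 hxn hmono hγ0 hγn hγ t ht
end

section
/- Let n = 2l+1 be odd with n ≥ 2, let 0 ≤ k < n with k even, and let t ∈ (x_k, x_{k+1}). Then q(t) = α + Σ_{i=1}^{l} ξ_{2i} + ω. -/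
/-!
The alternating weights pair the nodes `x_{2i-1}, x_{2i}` for `1 ≤ i ≤ l`, and each pair
contributes `1/(t - x_{2i}) - 1/(t - x_{2i-1}) = ξ_{2i}`; the two remaining half-weight terms at
`x_0 = -1` and `x_n = 1` are `α` and `ω`.
-/

open Finset

theorem Finset.sum_range_two_mul_add_two {M : Type*} [AddCommMonoid M] (f : ℕ → M) (l : ℕ) :
    ∑ i ∈ range (2 * l + 2), f i
      = f 0 + ∑ i ∈ Icc 1 l, (f (2 * i - 1) + f (2 * i)) + f (2 * l + 1) := by
  induction l with
  | zero => simp [sum_range_succ]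
  | succ l ih =>
    rw [show 2 * (l + 1) + 2 = 2 * l + 2 + 1 + 1 by ring, sum_range_succ, sum_range_succ, ih,
      sum_Icc_succ_top (by omega), show 2 * (l + 1) - 1 = 2 * l + 1 by omega]
    simp only [add_assoc, mul_add, mul_one]

theorem ne_of_mem_Ioo_of_monotoneOn {β : Type*} [LinearOrder β] {x : ℕ → β} {n k : ℕ}
    (hx : MonotoneOn x (Set.Iic n)) (hk : k < n) {t : β} (ht : t ∈ Set.Ioo (x k) (x (k + 1)))
    {i : ℕ} (hi : i ≤ n) : t ≠ x i := by
  rcases le_or_gt i k with hik | hki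
  · exact (lt_of_le_of_lt (hx (Set.mem_Iic.2 (by omega)) (Set.mem_Iic.2 (by omega)) hik) ht.1).ne'
  · exact (lt_of_lt_of_le ht.2 (hx (Set.mem_Iic.2 (by omega)) (Set.mem_Iic.2 (by omega)) hki)).ne

theorem one_div_sub_one_div_sub {K : Type*} [Field K] (a b t : K) (ha : t ≠ a) (hb : t ≠ b) :
    1 / (t - b) - 1 / (t - a) = (b - a) / ((t - b) * (t - a)) := by
  rw [div_sub_div _ _ (sub_ne_zero.2 hb) (sub_ne_zero.2 ha)]
  ring

theorem sum_alternating_div_sub_odd {K : Type*} [Field K] (l : ℕ) (x γ : ℕ → K)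
    (hx0 : x 0 = -1) (hxn : x (2 * l + 1) = 1)
    (hγ0 : γ 0 = 1 / 2) (hγn : γ (2 * l + 1) = -1 / 2)
    (hγ : ∀ i, 0 < i → i < 2 * l + 1 → γ i = (-1 : K) ^ i)
    (t : K) (ht : ∀ i ≤ 2 * l + 1, t ≠ x i) :
    ∑ i ∈ range (2 * l + 2), γ i / (t - x i)
      = 1 / (2 * (1 + t))
        + ∑ i ∈ Icc 1 l, (x (2 * i) - x (2 * i - 1)) / ((t - x (2 * i)) * (t - x (2 * i - 1)))
        + 1 / (2 * (1 - t)) := by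
  have hα : γ 0 / (t - x 0) = 1 / (2 * (1 + t)) := by
    rw [hγ0, hx0, div_div, sub_neg_eq_add, add_comm t]
  have hω : γ (2 * l + 1) / (t - x (2 * l + 1)) = 1 / (2 * (1 - t)) := by
    rw [hγn, hxn, div_div, ← neg_sub 1 t, mul_neg, neg_div_neg_eq]
  have hξ : ∀ i ∈ Icc 1 l, γ (2 * i - 1) / (t - x (2 * i - 1)) + γ (2 * i) / (t - x (2 * i))
      = (x (2 * i) - x (2 * i - 1)) / ((t - x (2 * i)) * (t - x (2 * i - 1))) := by
    intro i hi
    obtain ⟨hi1, hil⟩ := mem_Icc.1 hi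
    have hodd : γ (2 * i - 1) = -1 := by
      rw [hγ _ (by omega) (by omega), Odd.neg_one_pow ⟨i - 1, by omega⟩]
    have heven : γ (2 * i) = 1 := by
      rw [hγ _ (by omega) (by omega), Even.neg_one_pow ⟨i, by omega⟩]
    rw [hodd, heven, ← one_div_sub_one_div_sub _ _ _ (ht _ (by omega)) (ht _ (by omega))]
    ring
  rw [sum_range_two_mul_add_two, hα, hω, sum_congr rfl hξ]

theorem denominator_decomposition_odd_even_general
    (n l k : ℕ) (hl : n = 2 * l + 1) (hk : k < n)
    (x γ : ℕ → ℝ)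
    (hx0 : x 0 = -1) (hxn : x n = 1)
    (hmono : ∀ i < n, x i < x (i + 1))
    (hγ0 : γ 0 = 1 / 2) (hγn : γ n = (-1 : ℝ) ^ n / 2)
    (hγ : ∀ i, 0 < i → i < n → γ i = (-1 : ℝ) ^ i)
    (t : ℝ) (ht : t ∈ Set.Ioo (x k) (x (k + 1))) :
    ∑ i ∈ Finset.range (n + 1), γ i / (t - x i)
      = 1 / (2 * (1 + t))
        + (∑ i ∈ Finset.Icc 1 l,
            (x (2 * i) - x (2 * i - 1)) / ((t - x (2 * i)) * (t - x (2 * i - 1))))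
        + 1 / (2 * (1 - t)) := by
  have hnode : ∀ i ≤ n, t ≠ x i :=
    fun i => ne_of_mem_Ioo_of_monotoneOn (strictMonoOn_Iic_of_lt_succ hmono).monotoneOn hk ht
  subst hl
  rw [Odd.neg_one_pow ⟨l, rfl⟩] at hγn
  exact sum_alternating_div_sub_odd l x γ hx0 hxn hγ0 (by rw [hγn]) hγ t hnode

/-- Decomposition of the denominator `q(t)` of the second barycentric formula:
case `n = 2l+1` odd, `k` even, `t ∈ (x_k, x_{k+1})`:
`q(t) = α + Σ_{i=1}^{l} ξ_{2i} + ω`. -/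
theorem denominator_decomposition_odd_even
    (n l k : ℕ) (hn : 2 ≤ n) (hl : n = 2 * l + 1) (hk : k < n) (hke : Even k)
    (x γ : ℕ → ℝ)
    (hx0 : x 0 = -1) (hxn : x n = 1)
    (hmono : ∀ i < n, x i < x (i + 1))
    (hγ0 : γ 0 = 1 / 2) (hγn : γ n = (-1 : ℝ) ^ n / 2)
    (hγ : ∀ i, 0 < i → i < n → γ i = (-1 : ℝ) ^ i)
    (t : ℝ) (ht : t ∈ Set.Ioo (x k) (x (k + 1))) :
    ∑ i ∈ Finset.range (n + 1), γ i / (t - x i)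
      = 1 / (2 * (1 + t))
        + (∑ i ∈ Finset.Icc 1 l,
            (x (2 * i) - x (2 * i - 1)) / ((t - x (2 * i)) * (t - x (2 * i - 1))))
        + 1 / (2 * (1 - t)) :=
  denominator_decomposition_odd_even_general n l k hl hk x γ hx0 hxn hmono hγ0 hγn hγ t ht
end

section
/- Let n = 2l+1 be odd with n ≥ 2, let 0 ≤ k < n with k odd, and let t ∈ (x_k, x_{k+1}). Then q(t) = −(β + Σ_{i=1}^{l−1} ξ_{2i+1} + ψ). -/
/-!
With `g i = (t - x i)⁻¹`, each of `β`, `ξ_{2i+1}` and `ψ` splits into partial fractions: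
`β = g 1 - g 0 / 2`, `ξ_{2i+1} = g (2i+1) - g (2i)` and `ψ = g n / 2 - g (n-1)`.
Pairing consecutive terms of `q(t) = g 0 / 2 + ∑_{0<i<n} (-1)^i g i - g n / 2` gives exactly
minus their sum.
-/

open Finset

lemma apply_ne_of_mem_Ioo_of_lt_succ {β : Type*} [Preorder β] {x : ℕ → β} {n k i : ℕ} {t : β}
    (hmono : ∀ i < n, x i < x (i + 1)) (hk : k < n) (ht : t ∈ Set.Ioo (x k) (x (k + 1)))
    (hi : i ≤ n) : x i ≠ t := by
  have hx : MonotoneOn x (Set.Iic n) := (strictMonoOn_Iic_of_lt_succ hmono).monotoneOn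
  rcases le_or_gt i k with hik | hki
  · exact ((hx (Set.mem_Iic.2 hi) (Set.mem_Iic.2 hk.le) hik).trans_lt ht.1).ne
  · exact (ht.2.trans_le (hx (Set.mem_Iic.2 hk) (Set.mem_Iic.2 hi) hki)).ne'

lemma sum_range_two_mul_neg_one_pow_succ_mul {R : Type*} [CommRing R] (f : ℕ → R) (m : ℕ) :
    ∑ i ∈ range (2 * (m + 1)), (-1) ^ (i + 1) * f (i + 1)
      = f (2 * (m + 1)) - f 1 - ∑ i ∈ Icc 1 m, (f (2 * i + 1) - f (2 * i)) := by
  induction m with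
  | zero => simp [sum_range_succ, neg_add_eq_sub]
  | succ p ih =>
    rw [show 2 * (p + 1 + 1) = 2 * (p + 1) + 1 + 1 by ring, sum_range_succ, sum_range_succ, ih,
      sum_Icc_succ_top (by omega : 1 ≤ p + 1)]
    simp only [pow_succ, pow_mul]
    ring

lemma sum_range_barycentricWeight_div {K : Type*} [Field K] (γ y : ℕ → K) (N : ℕ)
    (hγ0 : γ 0 = 1 / 2) (hγN : γ (N + 1) = (-1) ^ (N + 1) / 2)
    (hγ : ∀ i, 0 < i → i < N + 1 → γ i = (-1) ^ i) :
    ∑ i ∈ range (N + 1 + 1), γ i / y i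
      = (y 0)⁻¹ / 2 + ∑ i ∈ range N, (-1) ^ (i + 1) * (y (i + 1))⁻¹
        + (-1) ^ (N + 1) * (y (N + 1))⁻¹ / 2 := by
  rw [sum_range_succ, sum_range_succ', hγ0, hγN]
  have hmid : ∀ i ∈ range N, γ (i + 1) / y (i + 1) = (-1) ^ (i + 1) * (y (i + 1))⁻¹ := by
    intro i hi
    rw [hγ (i + 1) i.succ_pos (by simpa using hi), div_eq_mul_inv]
  rw [sum_congr rfl hmid]
  ring

lemma two_add_add_div_eq_inv_sub_inv_div_two {K : Type*} [Field K] [NeZero (2 : K)] {y z : K}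
    (hyz : y - z ≠ 0) (hy : y - -1 ≠ 0) :
    ((2 + z) + y) / (2 * (y - z) * (1 + y)) = (y - z)⁻¹ - (y - -1)⁻¹ / 2 := by
  have hy' : 1 + y ≠ 0 := by rwa [sub_neg_eq_add, add_comm] at hy
  rw [sub_neg_eq_add, add_comm y 1]
  field_simp
  ring

lemma two_add_neg_add_neg_div_eq_inv_div_two_sub_inv {K : Type*} [Field K] [NeZero (2 : K)]
    {y z : K} (hyz : y - z ≠ 0) (hy : y - 1 ≠ 0) :
    ((2 + -z) + -y) / (2 * (-y - -z) * (1 + -y)) = (y - 1)⁻¹ / 2 - (y - z)⁻¹ := by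
  have hyz' : -y - -z ≠ 0 := by rwa [neg_sub_neg, ← neg_sub, neg_ne_zero]
  have hy' : 1 + -y ≠ 0 := by rwa [← sub_eq_add_neg, ← neg_sub, neg_ne_zero]
  field_simp
  ring

theorem denominator_decomposition_odd_odd_general
    (n l k : ℕ) (hn : 2 ≤ n) (hl : n = 2 * l + 1) (hk : k < n)
    (x γ : ℕ → ℝ)
    (hx0 : x 0 = -1) (hxn : x n = 1)
    (hmono : ∀ i < n, x i < x (i + 1))
    (hγ0 : γ 0 = 1 / 2) (hγn : γ n = (-1 : ℝ) ^ n / 2)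
    (hγ : ∀ i, 0 < i → i < n → γ i = (-1 : ℝ) ^ i)
    (t : ℝ) (ht : t ∈ Set.Ioo (x k) (x (k + 1))) :
    ∑ i ∈ Finset.range (n + 1), γ i / (t - x i)
      = -(((2 + x 1) + t) / (2 * (t - x 1) * (1 + t))
          + (∑ i ∈ Finset.Icc 1 (l - 1),
              (x (2 * i + 1) - x (2 * i)) / ((t - x (2 * i + 1)) * (t - x (2 * i))))
          + ((2 + -(x (n - 1))) + -t) / (2 * (-t - -(x (n - 1))) * (1 + -t))) := by
  have hnode : ∀ i ≤ n, t - x i ≠ 0 := fun i hi =>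
    sub_ne_zero.2 (apply_ne_of_mem_Ioo_of_lt_succ hmono hk ht hi).symm
  obtain ⟨m, rfl⟩ : ∃ m, l = m + 1 := ⟨l - 1, by omega⟩
  subst hl
  simp only [Nat.add_sub_cancel]
  have hβ := two_add_add_div_eq_inv_sub_inv_div_two (hnode 1 (by omega))
    (hx0 ▸ hnode 0 (by omega))
  have hψ := two_add_neg_add_neg_div_eq_inv_div_two_sub_inv (hnode (2 * (m + 1)) (by omega))
    (hxn ▸ hnode _ le_rfl)
  have hξ : ∀ i ∈ Icc 1 m, (x (2 * i + 1) - x (2 * i)) / ((t - x (2 * i + 1)) * (t - x (2 * i)))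
      = (t - x (2 * i + 1))⁻¹ - (t - x (2 * i))⁻¹ := fun i hi => by
    have him := (mem_Icc.1 hi).2
    rw [inv_sub_inv (hnode _ (by omega)) (hnode _ (by omega)), sub_sub_sub_cancel_left]
  rw [sum_range_barycentricWeight_div γ _ _ hγ0 hγn hγ, hβ, hψ, sum_congr rfl hξ,
    sum_range_two_mul_neg_one_pow_succ_mul (fun i => (t - x i)⁻¹), hx0, hxn,
    pow_succ, pow_mul]
  simp only [neg_one_sq, one_pow]
  ring

/-- Decomposition of the denominator `q(t)` of the second barycentric formula:
case `n = 2l+1` odd, `k` odd, `t ∈ (x_k, x_{k+1})`: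
`q(t) = -(β + Σ_{i=1}^{l-1} ξ_{2i+1} + ψ)`. -/
theorem denominator_decomposition_odd_odd
    (n l k : ℕ) (hn : 2 ≤ n) (hl : n = 2 * l + 1) (hk : k < n) (hko : Odd k)
    (x γ : ℕ → ℝ)
    (hx0 : x 0 = -1) (hxn : x n = 1)
    (hmono : ∀ i < n, x i < x (i + 1))
    (hγ0 : γ 0 = 1 / 2) (hγn : γ n = (-1 : ℝ) ^ n / 2)
    (hγ : ∀ i, 0 < i → i < n → γ i = (-1 : ℝ) ^ i)
    (t : ℝ) (ht : t ∈ Set.Ioo (x k) (x (k + 1))) :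
    ∑ i ∈ Finset.range (n + 1), γ i / (t - x i)
      = -(((2 + x 1) + t) / (2 * (t - x 1) * (1 + t))
          + (∑ i ∈ Finset.Icc 1 (l - 1),
              (x (2 * i + 1) - x (2 * i)) / ((t - x (2 * i + 1)) * (t - x (2 * i))))
          + ((2 + -(x (n - 1))) + -t) / (2 * (-t - -(x (n - 1))) * (1 + -t))) :=
  denominator_decomposition_odd_odd_general n l k hn hl hk x γ hx0 hxn hmono hγ0 hγn hγ t ht
end

section
/- Let n = 2l be even with n ≥ 2, let 0 ≤ k < n with k even, let f_0,…,f_n be reals, and let t ∈ (x_k, x_{k+1}). Then p(t) = α f_0 + Σ_{i=1}^{l−1} ξ_{2i} φ_{2i} + ψ ψ_f. -/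
/-!
With `g i = f i / (t - x i)` the numerator is `g 0 / 2 + ∑_{0<i<n} (-1)^i g i + g n / 2`.
For `n = 2l` the interior terms pair up as `g (2j) - g (2j-1)` for `j < l`, leaving `-g (n-1)`.
Each pair is `ξ_{2j} φ_{2j}` (partial fractions of the linear interpolant of `f` on
`[x_{2j-1}, x_{2j}]`), the leftover `-g (n-1) + g n / 2` is `ψ ψ_f`, and `g 0 / 2 = α f 0`
because `x 0 = -1`.
-/

open Finset

theorem sum_Icc_neg_one_pow_mul_eq_sum_pairs (g : ℕ → ℝ) (m : ℕ) :
    ∑ i ∈ Icc 1 (2 * m), (-1 : ℝ) ^ i * g i = ∑ j ∈ Icc 1 m, (g (2 * j) - g (2 * j - 1)) := by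
  induction m with
  | zero => simp
  | succ m ih =>
    rw [sum_Icc_succ_top (by omega), mul_add_one, sum_Icc_succ_top (by omega),
      sum_Icc_succ_top (by omega), ih, show 2 * m + 1 + 1 = 2 * (m + 1) by ring,
      show 2 * (m + 1) - 1 = 2 * m + 1 by omega]
    simp only [pow_succ, pow_mul]
    ring

theorem sum_range_barycentric_weights_mul (γ g : ℕ → ℝ) {l : ℕ} (hl : 1 ≤ l)
    (hγ0 : γ 0 = 1 / 2) (hγn : γ (2 * l) = 1 / 2)
    (hγ : ∀ i, 0 < i → i < 2 * l → γ i = (-1 : ℝ) ^ i) :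
    ∑ i ∈ range (2 * l + 1), γ i * g i
      = g 0 / 2 + ∑ j ∈ Icc 1 (l - 1), (g (2 * j) - g (2 * j - 1))
        - g (2 * l - 1) + g (2 * l) / 2 := by
  obtain ⟨m, rfl⟩ : ∃ m, l = m + 1 := ⟨l - 1, by omega⟩
  have hinterior : ∑ i ∈ Icc 1 (2 * m + 1), γ i * g i
      = ∑ i ∈ Icc 1 (2 * m), (-1 : ℝ) ^ i * g i - g (2 * m + 1) := by
    rw [sum_Icc_succ_top (by omega), sum_congr rfl fun i hi => by
      rw [hγ i (by simp at hi; omega) (by simp at hi; omega)],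
      hγ _ (by omega) (by omega), pow_succ, pow_mul]
    ring
  rw [range_eq_Ico, sum_eq_sum_Ico_succ_bot (by omega),
    show 2 * (m + 1) + 1 = 2 * m + 2 + 1 by ring, Ico_add_one_right_eq_Icc,
    sum_Icc_succ_top (by omega), hinterior,
    sum_Icc_neg_one_pow_mul_eq_sum_pairs, hγ0, show 2 * m + 1 + 1 = 2 * (m + 1) by ring, hγn,
    show 2 * (m + 1) - 1 = 2 * m + 1 by omega, Nat.add_sub_cancel]
  ring

theorem mul_linear_interp_eq_div_sub_div {a b t fa fb : ℝ} (hab : a ≠ b) (hta : t ≠ a)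
    (htb : t ≠ b) :
    (b - a) / ((t - b) * (t - a)) * ((fb + fa) / 2 + (t - (b + a) / 2) * (fb - fa) / (b - a))
      = fb / (t - b) - fa / (t - a) := by
  have := sub_ne_zero.2 hab.symm
  have := sub_ne_zero.2 hta
  have := sub_ne_zero.2 htb
  field_simp
  ring

theorem endpoint_weight_mul_eq_div_sub_div {y z u v : ℝ} (hyz : y ≠ z) (hy : 1 + y ≠ 0)
    (hzy : 2 + z + y ≠ 0) :
    (2 + z + y) / (2 * (y - z) * (1 + y)) * ((2 * (1 + y) * u - (y - z) * v) / (2 + z + y))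
      = u / (y - z) - v / (2 * (1 + y)) := by
  have := sub_ne_zero.2 hyz
  field_simp

theorem ne_of_mem_Ioo_of_strictMonoOn {α : Type*} [Preorder α] {x : ℕ → α} {n k i : ℕ}
    {t : α} (hx : StrictMonoOn x (Set.Iic n)) (hk : k < n) (ht : t ∈ Set.Ioo (x k) (x (k + 1)))
    (hi : i ≤ n) : t ≠ x i := by
  rcases le_or_gt i k with hik | hki
  · exact (ht.1.trans_le' (hx.monotoneOn (Set.mem_Iic.2 hi) (Set.mem_Iic.2 hk.le) hik)).ne'
  · exact (ht.2.trans_le (hx.monotoneOn (Set.mem_Iic.2 hk) (Set.mem_Iic.2 hi) hki)).ne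

theorem numerator_decomposition_even_even_general
    (n l k : ℕ) (hl : n = 2 * l) (hk : k < n)
    (x γ f : ℕ → ℝ)
    (hx0 : x 0 = -1) (hxn : x n = 1)
    (hmono : ∀ i < n, x i < x (i + 1))
    (hγ0 : γ 0 = 1 / 2) (hγn : γ n = (-1 : ℝ) ^ n / 2)
    (hγ : ∀ i, 0 < i → i < n → γ i = (-1 : ℝ) ^ i)
    (t : ℝ) (ht : t ∈ Set.Ioo (x k) (x (k + 1))) :
    ∑ i ∈ Finset.range (n + 1), γ i * f i / (t - x i)
      = 1 / (2 * (1 + t)) * f 0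
        + (∑ i ∈ Finset.Icc 1 (l - 1),
            ((x (2 * i) - x (2 * i - 1)) / ((t - x (2 * i)) * (t - x (2 * i - 1))))
              * ((f (2 * i) + f (2 * i - 1)) / 2
                 + (t - (x (2 * i) + x (2 * i - 1)) / 2)
                   * (f (2 * i) - f (2 * i - 1)) / (x (2 * i) - x (2 * i - 1))))
        + (((2 + -(x (n - 1))) + -t) / (2 * (-t - -(x (n - 1))) * (1 + -t)))
          * ((2 * (1 + -t) * f (n - 1) - (-t - -(x (n - 1))) * f n)
             / ((2 + -(x (n - 1))) + -t)) := by
  subst hl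
  have hx : StrictMonoOn x (Set.Iic (2 * l)) := strictMonoOn_Iic_of_lt_succ hmono
  have hnode : ∀ i ≤ 2 * l, t ≠ x i := fun i hi => ne_of_mem_Ioo_of_strictMonoOn hx hk ht hi
  have hxlast : x (2 * l - 1) < 1 := hxn ▸ hx (by simp) (by simp) (by omega)
  have ht1 : t < 1 := hxn ▸ ht.2.trans_le (hx.monotoneOn (by simp; omega) (by simp) (by omega))
  rw [sum_congr rfl fun i _ => mul_div_assoc (γ i) (f i) (t - x i),
    sum_range_barycentric_weights_mul γ _ (by omega) hγ0 (by rw [hγn, pow_mul]; norm_num) hγ,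
    endpoint_weight_mul_eq_div_sub_div (by simpa [eq_comm] using hnode (2 * l - 1) (by omega))
      (by linarith) (by linarith), hx0, hxn]
  conv_rhs => rw [sum_congr rfl fun j hj => by
      obtain ⟨hj1, hjl⟩ := mem_Icc.1 hj
      exact mul_linear_interp_eq_div_sub_div
        (hx (by simp; omega) (by simp; omega) (by omega : 2 * j - 1 < 2 * j)).ne
        (hnode _ (by omega)) (hnode _ (by omega))]
  rw [show -t - -x (2 * l - 1) = -(t - x (2 * l - 1)) by ring,
    show 2 * (1 + -t) = -(2 * (t - 1)) by ring, div_neg, div_neg]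
  simp only [div_eq_mul_inv, mul_inv]
  ring

/-- Decomposition of the numerator `p(t)` of the second barycentric formula:
case `n = 2l` even, `k` even, `t ∈ (x_k, x_{k+1})`:
`p(t) = α f_0 + Σ_{i=1}^{l-1} ξ_{2i} φ_{2i} + ψ ψ_f`. -/
theorem numerator_decomposition_even_even
    (n l k : ℕ) (hn : 2 ≤ n) (hl : n = 2 * l) (hk : k < n) (hke : Even k)
    (x γ f : ℕ → ℝ)
    (hx0 : x 0 = -1) (hxn : x n = 1)
    (hmono : ∀ i < n, x i < x (i + 1))
    (hγ0 : γ 0 = 1 / 2) (hγn : γ n = (-1 : ℝ) ^ n / 2)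
    (hγ : ∀ i, 0 < i → i < n → γ i = (-1 : ℝ) ^ i)
    (t : ℝ) (ht : t ∈ Set.Ioo (x k) (x (k + 1))) :
    ∑ i ∈ Finset.range (n + 1), γ i * f i / (t - x i)
      = 1 / (2 * (1 + t)) * f 0
        + (∑ i ∈ Finset.Icc 1 (l - 1),
            ((x (2 * i) - x (2 * i - 1)) / ((t - x (2 * i)) * (t - x (2 * i - 1))))
              * ((f (2 * i) + f (2 * i - 1)) / 2
                 + (t - (x (2 * i) + x (2 * i - 1)) / 2)
                   * (f (2 * i) - f (2 * i - 1)) / (x (2 * i) - x (2 * i - 1))))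
        + (((2 + -(x (n - 1))) + -t) / (2 * (-t - -(x (n - 1))) * (1 + -t)))
          * ((2 * (1 + -t) * f (n - 1) - (-t - -(x (n - 1))) * f n)
             / ((2 + -(x (n - 1))) + -t)) :=
  numerator_decomposition_even_even_general n l k hl hk x γ f hx0 hxn hmono hγ0 hγn hγ t ht
end

section
/- Let n = 2l be even with n ≥ 2, let 0 ≤ k < n with k odd, let f_0,…,f_n be reals, and let t ∈ (x_k, x_{k+1}). Then p(t) = −(β β_f + Σ_{i=1}^{l−1} ξ_{2i+1} φ_{2i+1} + ω f_n). -/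
/-!
Each summand of the right-hand side is a difference of two summands of `p(t)`: on an interior
pair of nodes, `ξ_j φ_j = f_j / (t - x_j) - f_{j-1} / (t - x_{j-1})`, and at the left end
`β β_f = f_1 / (t - x_1) - f_0 / (2 (1 + t))`. Grouping the summands of `p(t)` in pairs
`(2i, 2i + 1)`, on which the simplified weights are `1, -1`, the two sides agree term by term.
-/

open Finset

theorem sum_range_two_mul_add_three {M : Type*} [AddCommMonoid M] (h : ℕ → M) (m : ℕ) :
    ∑ i ∈ range (2 * m + 3), h i
      = h 0 + h 1 + ∑ i ∈ Icc 1 m, (h (2 * i) + h (2 * i + 1)) + h (2 * m + 2) := by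
  induction m with
  | zero => simp [sum_range_succ]
  | succ m ih =>
    rw [show 2 * (m + 1) + 3 = 2 * m + 3 + 1 + 1 by ring, sum_range_succ, sum_range_succ, ih,
      sum_Icc_succ_top (by omega : 1 ≤ m + 1)]
    simp only [Nat.mul_succ]
    abel

theorem sum_simplifiedWeights_mul_of_even {n l : ℕ} (hl : n = 2 * l) (hl0 : 0 < l)
    {γ : ℕ → ℝ} (hγ0 : γ 0 = 1 / 2) (hγn : γ n = (-1 : ℝ) ^ n / 2)
    (hγ : ∀ i, 0 < i → i < n → γ i = (-1 : ℝ) ^ i) (g : ℕ → ℝ) :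
    ∑ i ∈ range (n + 1), γ i * g i
      = g 0 / 2 - g 1 + ∑ i ∈ Icc 1 (l - 1), (g (2 * i) - g (2 * i + 1)) + g n / 2 := by
  obtain ⟨m, rfl⟩ : ∃ m, l = m + 1 := ⟨l - 1, by omega⟩
  subst hl
  have hγ1 : γ 1 = -1 := by rw [hγ 1 one_pos (by omega)]; norm_num
  have hγpair : ∀ i ∈ Icc 1 m, γ (2 * i) * g (2 * i) + γ (2 * i + 1) * g (2 * i + 1)
      = g (2 * i) - g (2 * i + 1) := by
    intro i hi
    rw [mem_Icc] at hi
    rw [hγ (2 * i) (by omega) (by omega), hγ (2 * i + 1) (by omega) (by omega), pow_succ,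
      (even_two_mul i).neg_one_pow]
    ring
  rw [show 2 * (m + 1) + 1 = 2 * m + 3 by ring, sum_range_two_mul_add_three, sum_congr rfl hγpair,
    hγ0, hγ1, show 2 * m + 2 = 2 * (m + 1) by ring, hγn, (even_two_mul _).neg_one_pow,
    Nat.add_sub_cancel]
  ring

theorem StrictMonoOn.ne_of_mem_Ioo {x : ℕ → ℝ} {n k i : ℕ} (hx : StrictMonoOn x (Set.Iic n))
    (hk : k < n) (hi : i ≤ n) {t : ℝ} (ht : t ∈ Set.Ioo (x k) (x (k + 1))) : t ≠ x i := by
  rcases le_or_gt i k with hik | hki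
  · exact (ht.1.trans_le' (hx.monotoneOn (hik.trans hk.le) hk.le hik)).ne'
  · exact (ht.2.trans_le (hx.monotoneOn (Nat.succ_le_of_lt hk) hi hki)).ne

/-- `φ` is the value at `t` of the chord through `(a, fa)` and `(b, fb)`, and
`(b - a) φ = fb (t - a) - fa (t - b)`. -/
theorem secant_mul_chord_eq_sub {a b fa fb t : ℝ} (hab : a ≠ b) (hta : t ≠ a) (htb : t ≠ b) :
    (b - a) / ((t - b) * (t - a)) * ((fb + fa) / 2 + (t - (b + a) / 2) * (fb - fa) / (b - a))
      = fb / (t - b) - fa / (t - a) := by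
  have : b - a ≠ 0 := sub_ne_zero.2 hab.symm
  have : t - a ≠ 0 := sub_ne_zero.2 hta
  have : t - b ≠ 0 := sub_ne_zero.2 htb
  field_simp
  ring

theorem left_boundary_term_eq_sub {x₁ f₀ f₁ t : ℝ} (hx₁ : -1 < x₁) (ht : -1 < t) (htx : t ≠ x₁) :
    ((2 + x₁) + t) / (2 * (t - x₁) * (1 + t)) * ((2 * (1 + t) * f₁ - (t - x₁) * f₀) / ((2 + x₁) + t))
      = f₁ / (t - x₁) - f₀ / (2 * (1 + t)) := by
  have : (2 + x₁) + t ≠ 0 := by linarith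
  have : 1 + t ≠ 0 := by linarith
  have : t - x₁ ≠ 0 := sub_ne_zero.2 htx
  field_simp

theorem numerator_decomposition_even_odd_general
    (n l k : ℕ) (hl : n = 2 * l) (hk : k < n)
    (x γ f : ℕ → ℝ)
    (hx0 : x 0 = -1) (hxn : x n = 1)
    (hmono : ∀ i < n, x i < x (i + 1))
    (hγ0 : γ 0 = 1 / 2) (hγn : γ n = (-1 : ℝ) ^ n / 2)
    (hγ : ∀ i, 0 < i → i < n → γ i = (-1 : ℝ) ^ i)
    (t : ℝ) (ht : t ∈ Set.Ioo (x k) (x (k + 1))) :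
    ∑ i ∈ Finset.range (n + 1), γ i * f i / (t - x i)
      = -((((2 + x 1) + t) / (2 * (t - x 1) * (1 + t)))
            * ((2 * (1 + t) * f 1 - (t - x 1) * f 0) / ((2 + x 1) + t))
          + (∑ i ∈ Finset.Icc 1 (l - 1),
              ((x (2 * i + 1) - x (2 * i)) / ((t - x (2 * i + 1)) * (t - x (2 * i))))
                * ((f (2 * i + 1) + f (2 * i)) / 2
                   + (t - (x (2 * i + 1) + x (2 * i)) / 2)
                     * (f (2 * i + 1) - f (2 * i)) / (x (2 * i + 1) - x (2 * i))))
          + 1 / (2 * (1 - t)) * f n) := by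
  have hx : StrictMonoOn x (Set.Iic n) := strictMonoOn_Iic_of_lt_succ hmono
  have hnode : ∀ i ≤ n, t ≠ x i := fun i hi ↦ hx.ne_of_mem_Ioo hk hi ht
  have ht0 : -1 < t := hx0 ▸ ht.1.trans_le' (hx.monotoneOn (Nat.zero_le _) hk.le k.zero_le)
  have hx1 : -1 < x 1 := hx0 ▸ hmono 0 (by omega)
  have hchord : ∀ i ∈ Icc 1 (l - 1),
      (x (2 * i + 1) - x (2 * i)) / ((t - x (2 * i + 1)) * (t - x (2 * i)))
        * ((f (2 * i + 1) + f (2 * i)) / 2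
          + (t - (x (2 * i + 1) + x (2 * i)) / 2) * (f (2 * i + 1) - f (2 * i))
            / (x (2 * i + 1) - x (2 * i)))
      = f (2 * i + 1) / (t - x (2 * i + 1)) - f (2 * i) / (t - x (2 * i)) := by
    intro i hi
    rw [mem_Icc] at hi
    exact secant_mul_chord_eq_sub (hmono (2 * i) (by omega)).ne (hnode _ (by omega))
      (hnode _ (by omega))
  rw [sum_congr rfl fun i _ ↦ mul_div_assoc (γ i) (f i) (t - x i),
    sum_simplifiedWeights_mul_of_even hl (by omega) hγ0 hγn hγ,
    left_boundary_term_eq_sub hx1 ht0 (hnode 1 (by omega)),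
    sum_congr rfl hchord,
    hx0, hxn, sum_sub_distrib, sum_sub_distrib]
  have hleft : f 0 / (t - -1) / 2 = f 0 / (2 * (1 + t)) := by
    rw [sub_neg_eq_add, add_comm t, div_div, mul_comm]
  have hright : f n / (t - 1) / 2 = -(1 / (2 * (1 - t)) * f n) := by
    rw [← neg_sub 1 t, div_neg, neg_div, div_div, one_div_mul_eq_div, mul_comm]
  rw [hleft, hright]
  ring

/-- Decomposition of the numerator `p(t)` of the second barycentric formula:
case `n = 2l` even, `k` odd, `t ∈ (x_k, x_{k+1})`:
`p(t) = -(β β_f + Σ_{i=1}^{l-1} ξ_{2i+1} φ_{2i+1} + ω f_n)`. -/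
theorem numerator_decomposition_even_odd
    (n l k : ℕ) (hn : 2 ≤ n) (hl : n = 2 * l) (hk : k < n) (hko : Odd k)
    (x γ f : ℕ → ℝ)
    (hx0 : x 0 = -1) (hxn : x n = 1)
    (hmono : ∀ i < n, x i < x (i + 1))
    (hγ0 : γ 0 = 1 / 2) (hγn : γ n = (-1 : ℝ) ^ n / 2)
    (hγ : ∀ i, 0 < i → i < n → γ i = (-1 : ℝ) ^ i)
    (t : ℝ) (ht : t ∈ Set.Ioo (x k) (x (k + 1))) :
    ∑ i ∈ Finset.range (n + 1), γ i * f i / (t - x i)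
      = -((((2 + x 1) + t) / (2 * (t - x 1) * (1 + t)))
            * ((2 * (1 + t) * f 1 - (t - x 1) * f 0) / ((2 + x 1) + t))
          + (∑ i ∈ Finset.Icc 1 (l - 1),
              ((x (2 * i + 1) - x (2 * i)) / ((t - x (2 * i + 1)) * (t - x (2 * i))))
                * ((f (2 * i + 1) + f (2 * i)) / 2
                   + (t - (x (2 * i + 1) + x (2 * i)) / 2)
                     * (f (2 * i + 1) - f (2 * i)) / (x (2 * i + 1) - x (2 * i))))
          + 1 / (2 * (1 - t)) * f n) :=
  numerator_decomposition_even_odd_general n l k hl hk x γ f hx0 hxn hmono hγ0 hγn hγ t ht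
end

section
/- Let n = 2l+1 be odd with n ≥ 2, let 0 ≤ k < n with k even, let f_0,…,f_n be reals, and let t ∈ (x_k, x_{k+1}). Then p(t) = α f_0 + Σ_{i=1}^{l} ξ_{2i} φ_{2i} + ω f_n. -/
/-!
Since `n` is odd, the interior weights pair up as `γ_{2j-1} = -1`, `γ_{2j} = 1` for
`1 ≤ j ≤ l`, leaving the half-weighted endpoint terms, which are `α f_0` and `ω f_n`.
Each pair `f_{2j}/(t - x_{2j}) - f_{2j-1}/(t - x_{2j-1})` equals `ξ_{2j} φ_{2j}`, because `φ_{2j}`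
is the secant through `(x_{2j-1}, f_{2j-1})` and `(x_{2j}, f_{2j})` evaluated at `t`.
-/

open Finset

lemma sum_range_two_mul_add_one_eq_add_sum_pairs {M : Type*} [AddCommMonoid M]
    (l : ℕ) (g : ℕ → M) :
    ∑ i ∈ range (2 * l + 1), g i = g 0 + ∑ j ∈ Icc 1 l, (g (2 * j - 1) + g (2 * j)) := by
  induction l with
  | zero => simp
  | succ m ih =>
    rw [show 2 * (m + 1) + 1 = 2 * m + 1 + 1 + 1 by ring, sum_range_succ, sum_range_succ, ih,
      sum_Icc_succ_top (by omega), show 2 * (m + 1) - 1 = 2 * m + 1 by omega,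
      show 2 * (m + 1) = 2 * m + 1 + 1 by ring, add_assoc, add_assoc]

lemma ne_of_mem_Ioo_of_strictMonoOn_Iic {α : Type*} [LinearOrder α] {x : ℕ → α} {n k i : ℕ}
    (hx : StrictMonoOn x (Set.Iic n)) (hk : k < n) {t : α} (ht : t ∈ Set.Ioo (x k) (x (k + 1)))
    (hi : i ≤ n) : t ≠ x i := by
  rcases le_or_gt i k with hik | hki
  · exact (lt_of_le_of_lt (hx.monotoneOn hi (Set.mem_Iic.2 hk.le) hik) ht.1).ne'
  · exact (lt_of_lt_of_le ht.2 (hx.monotoneOn (Set.mem_Iic.2 hk) hi hki)).ne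

/-- The bracket on the right is `(fb (t - a) - fa (t - b)) / (b - a)`. -/
lemma div_sub_div_eq_mul_secant {K : Type*} [Field K] [NeZero (2 : K)] {a b t fa fb : K}
    (hab : a ≠ b) (ha : t ≠ a) (hb : t ≠ b) :
    fb / (t - b) - fa / (t - a)
      = (b - a) / ((t - b) * (t - a))
          * ((fb + fa) / 2 + (t - (b + a) / 2) * (fb - fa) / (b - a)) := by
  have hab' : b - a ≠ 0 := sub_ne_zero.2 hab.symm
  have ha' : t - a ≠ 0 := sub_ne_zero.2 ha
  have hb' : t - b ≠ 0 := sub_ne_zero.2 hb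
  field_simp
  ring

theorem numerator_decomposition_odd_even_general
    (n l k : ℕ) (hl : n = 2 * l + 1) (hk : k < n)
    (x γ f : ℕ → ℝ)
    (hx0 : x 0 = -1) (hxn : x n = 1)
    (hmono : ∀ i < n, x i < x (i + 1))
    (hγ0 : γ 0 = 1 / 2) (hγn : γ n = (-1 : ℝ) ^ n / 2)
    (hγ : ∀ i, 0 < i → i < n → γ i = (-1 : ℝ) ^ i)
    (t : ℝ) (ht : t ∈ Set.Ioo (x k) (x (k + 1))) :
    ∑ i ∈ Finset.range (n + 1), γ i * f i / (t - x i)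
      = 1 / (2 * (1 + t)) * f 0
        + (∑ i ∈ Finset.Icc 1 l,
            ((x (2 * i) - x (2 * i - 1)) / ((t - x (2 * i)) * (t - x (2 * i - 1))))
              * ((f (2 * i) + f (2 * i - 1)) / 2
                 + (t - (x (2 * i) + x (2 * i - 1)) / 2)
                   * (f (2 * i) - f (2 * i - 1)) / (x (2 * i) - x (2 * i - 1))))
        + 1 / (2 * (1 - t)) * f n := by
  subst hl
  have hx : StrictMonoOn x (Set.Iic (2 * l + 1)) := strictMonoOn_Iic_of_lt_succ hmono
  have hne : ∀ i ≤ 2 * l + 1, t ≠ x i := fun i hi ↦ ne_of_mem_Ioo_of_strictMonoOn_Iic hx hk ht hi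
  have h0 : 1 + t ≠ 0 := fun h ↦ hne 0 (by omega) (by rw [hx0]; linarith)
  have h1 : 1 - t ≠ 0 := fun h ↦ hne _ le_rfl (by rw [hxn]; linarith)
  have e0 : γ 0 * f 0 / (t - x 0) = 1 / (2 * (1 + t)) * f 0 := by
    rw [hγ0, hx0, sub_neg_eq_add, add_comm]
    field_simp
  have en : γ (2 * l + 1) * f (2 * l + 1) / (t - x (2 * l + 1))
      = 1 / (2 * (1 - t)) * f (2 * l + 1) := by
    rw [hγn, hxn, Odd.neg_one_pow ⟨l, rfl⟩, ← neg_sub 1 t]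
    field_simp
  rw [sum_range_succ, sum_range_two_mul_add_one_eq_add_sum_pairs, e0, en]
  congr 2
  refine sum_congr rfl fun j hj ↦ ?_
  obtain ⟨hj1, hjl⟩ := mem_Icc.1 hj
  rw [hγ _ (by omega) (by omega), hγ _ (by omega) (by omega),
    Odd.neg_one_pow ⟨j - 1, by omega⟩, Even.neg_one_pow ⟨j, by ring⟩, neg_one_mul, neg_div,
    one_mul, neg_add_eq_sub]
  exact div_sub_div_eq_mul_secant (hx (Set.mem_Iic.2 (by omega)) (Set.mem_Iic.2 (by omega))
    (by omega)).ne (hne _ (by omega)) (hne _ (by omega))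

/-- Decomposition of the numerator `p(t)` of the second barycentric formula:
case `n = 2l+1` odd, `k` even, `t ∈ (x_k, x_{k+1})`:
`p(t) = α f_0 + Σ_{i=1}^{l} ξ_{2i} φ_{2i} + ω f_n`. -/
theorem numerator_decomposition_odd_even
    (n l k : ℕ) (hn : 2 ≤ n) (hl : n = 2 * l + 1) (hk : k < n) (hke : Even k)
    (x γ f : ℕ → ℝ)
    (hx0 : x 0 = -1) (hxn : x n = 1)
    (hmono : ∀ i < n, x i < x (i + 1))
    (hγ0 : γ 0 = 1 / 2) (hγn : γ n = (-1 : ℝ) ^ n / 2)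
    (hγ : ∀ i, 0 < i → i < n → γ i = (-1 : ℝ) ^ i)
    (t : ℝ) (ht : t ∈ Set.Ioo (x k) (x (k + 1))) :
    ∑ i ∈ Finset.range (n + 1), γ i * f i / (t - x i)
      = 1 / (2 * (1 + t)) * f 0
        + (∑ i ∈ Finset.Icc 1 l,
            ((x (2 * i) - x (2 * i - 1)) / ((t - x (2 * i)) * (t - x (2 * i - 1))))
              * ((f (2 * i) + f (2 * i - 1)) / 2
                 + (t - (x (2 * i) + x (2 * i - 1)) / 2)
                   * (f (2 * i) - f (2 * i - 1)) / (x (2 * i) - x (2 * i - 1))))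
        + 1 / (2 * (1 - t)) * f n :=
  numerator_decomposition_odd_even_general n l k hl hk x γ f hx0 hxn hmono hγ0 hγn hγ t ht
end

section
/- Let ε and ρ be reals with 0 < ε, ρ ≥ 1, and ρε < 1 − 1/√2, and let δ be a real with |δ| ≤ 1. Then (1 − ε)^{ρ(1 + ρε)} ≤ 1 + ρδε ≤ (1 − ε)^{−ρ(1 + ρε)}, where the powers are real powers. -/
/-!
Put `s = ρε`, so that `ε ≤ s`, `|ρδε| ≤ s` and `s < 1/2`. From `1 - ε ≤ exp (-ε)`,
`(1 - ε)^{±ρ(1+s)}` is bounded by `exp (∓s(1+s))`. The upper bound then follows from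
`1 + s ≤ exp s ≤ exp (s(1+s))`, and the lower one from `exp (-s(1+s)) ≤ 1 - s`, which
holds for `0 ≤ s ≤ 1/2` by the quadratic lower bound for `exp`.
-/

open Real

lemma one_sub_inv_sqrt_two_lt_half : 1 - 1 / √2 < 1 / 2 := by
  have : 1 / 2 < 1 / √2 := one_div_lt_one_div_of_lt (by positivity) (by
    linarith [sqrt_two_lt_three_halves])
  linarith

lemma exp_neg_mul_one_add_le_one_sub {s : ℝ} (hs₀ : 0 ≤ s) (hs : s ≤ 1 / 2) :
    exp (-(s * (1 + s))) ≤ 1 - s := by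
  have hquad := quadratic_le_exp_of_nonneg (mul_nonneg hs₀ (by linarith : 0 ≤ 1 + s))
  have hcubic : 2 * s ≤ (1 - s) * (1 + s) ^ 2 := by nlinarith
  rw [exp_neg, inv_le_iff_one_le_mul₀ (exp_pos _)]
  -- `(1 - s) (1 + u + u²/2) = 1 + s² ((1 - s)(1 + s)² - 2s) / 2` for `u = s(1+s)`
  nlinarith [mul_nonneg (sq_nonneg s) (by linarith : 0 ≤ (1 - s) * (1 + s) ^ 2 - 2 * s)]

lemma one_sub_rpow_le_exp_neg_mul {ε p : ℝ} (hε : ε ≤ 1) (hp : 0 ≤ p) :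
    (1 - ε) ^ p ≤ exp (-(p * ε)) := by
  calc (1 - ε) ^ p ≤ exp (-ε) ^ p := rpow_le_rpow (by linarith) (one_sub_le_exp_neg ε) hp
    _ = exp (-(p * ε)) := by rw [← exp_mul]; ring_nf

lemma exp_mul_le_one_sub_rpow_neg {ε p : ℝ} (hε : ε < 1) (hp : 0 ≤ p) :
    exp (p * ε) ≤ (1 - ε) ^ (-p) := by
  have hpos : 0 < (1 - ε) ^ p := rpow_pos_of_pos (by linarith) p
  rw [rpow_neg (by linarith), ← inv_inv (exp (p * ε)), ← exp_neg]
  exact inv_anti₀ hpos (one_sub_rpow_le_exp_neg_mul hε.le hp)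

/-- Lemma on Stewart-style error counters: if `ρ ≥ 1`, `ρε < 1 - 1/√2` and
`|δ| ≤ 1`, then `1 + ρδε ∈ ξ_{ρ(1+ρε)}`, i.e.
`(1-ε)^{ρ(1+ρε)} ≤ 1 + ρδε ≤ (1-ε)^{-ρ(1+ρε)}` (real powers). -/
theorem one_add_rho_delta_eps_mem_xi
    (ε ρ δ : ℝ) (hε : 0 < ε) (hρ : 1 ≤ ρ)
    (h : ρ * ε < 1 - 1 / Real.sqrt 2) (hδ : |δ| ≤ 1) :
    (1 - ε) ^ (ρ * (1 + ρ * ε)) ≤ 1 + ρ * δ * ε ∧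
    1 + ρ * δ * ε ≤ (1 - ε) ^ (-(ρ * (1 + ρ * ε))) := by
  have hs : ρ * ε < 1 / 2 := h.trans one_sub_inv_sqrt_two_lt_half
  have hεs : ε ≤ ρ * ε := le_mul_of_one_le_left hε.le hρ
  have hexp₀ : 0 ≤ ρ * (1 + ρ * ε) := by positivity
  have hexp : ρ * (1 + ρ * ε) * ε = ρ * ε * (1 + ρ * ε) := by ring
  have hδs : |ρ * δ * ε| ≤ ρ * ε := by
    rw [abs_mul, abs_mul, abs_of_pos hε, abs_of_nonneg (by linarith : 0 ≤ ρ)]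
    nlinarith [abs_nonneg δ]
  obtain ⟨hlo, hhi⟩ := abs_le.mp hδs
  constructor
  · calc (1 - ε) ^ (ρ * (1 + ρ * ε)) ≤ exp (-(ρ * ε * (1 + ρ * ε))) := by
          rw [← hexp]; exact one_sub_rpow_le_exp_neg_mul (by linarith) hexp₀
      _ ≤ 1 - ρ * ε := exp_neg_mul_one_add_le_one_sub (by linarith) hs.le
      _ ≤ 1 + ρ * δ * ε := by linarith
  · calc 1 + ρ * δ * ε ≤ ρ * ε + 1 := by linarith
      _ ≤ exp (ρ * ε) := add_one_le_exp _
      _ ≤ exp (ρ * ε * (1 + ρ * ε)) := exp_le_exp.mpr (by nlinarith)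
      _ ≤ (1 - ε) ^ (-(ρ * (1 + ρ * ε))) := by
          rw [← hexp]; exact exp_mul_le_one_sub_rpow_neg (by linarith) hexp₀
end

section
/- Let n ≥ 2, let 1 ≤ k < n, let x_i = −cos(iπ/n) for i = 0,…,n, let γ be the simplified weights, let f_0,…,f_n be reals with f_k ≠ 0 and |f_k| ≥ (max_{0≤j≤n} |f_j|)/2, let x̂_0,…,x̂_n be reals, and let t ∈ [−1,1] with t ≠ x_i and t ≠ x̂_i for all i. Assume α_{n,k}(x̂) ≤ 1/24, δ_{n,k}(x̂_k) ≤ 1/24, and δ_{n,k}(t) ≤ 1/24. Then there exist reals β_{n,k,i} and κ_{n,k,i} (for i ≠ k) such that ã(t, x̂) = a(t)·e^{−r_{n,k}(t,x̂)}, where r_{n,k}(t,x̂) = Σ_{i≠k} [β_{n,k,i}(x̂_i − x_i) + κ_{n,k,i}(x̂_k − x_k)]/(x_k − x_i) − Σ_{i≠k} κ_{n,k,i}(t − x_k)(x̂_i − x_i)/((x_k − x_i)(t − x_i)), and moreover |β_{n,k,i} − 1| ≤ 1.05·δ_{n,k}(t) + 0.6·α_{n,k}(x̂) and |κ_{n,k,i}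 − γ_i f_i/(γ_k f_k)| ≤ 2.4·α_{n,k}(x̂) + 7.2·δ_{n,k}(t) + 4·δ_{n,k}(x̂_k) + 4·α_{n,k}(x̂)·δ_{n,k}(t) for all i ≠ k. -/
/-!
Put `u_i = (x̂_i - x_i) / (t - x_i)`, so that `t - x̂_i = (t - x_i) (1 - u_i)`, and
`ρ_i = γ_i f_i / (γ_k f_k)`. Multiplying the two barycentric sums by `t - x_k` and `t - x̂_k`
turns them into `γ_k f_k (1 + B)` and `γ_k f_k (1 + A)`, where
`B = ∑_{i ≠ k} ρ_i (t - x_k) / (t - x_i)` and `A` is the same sum at the perturbed nodes.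
Hence `ã / a = ∏_{i ≠ k} (1 - u_i) · (1 + w)` with `w = (A - B) / (1 + B)`, that is
`r = -∑ log (1 - u_i) - log (1 + w)`. Writing `log (1 + y) = y L(y)` and expanding `u_i` and
`A - B` in the node errors gives `r` the required shape, with
`β_i = L(-u_i) (x_k - x_i) / (t - x_i)` and `κ_i = ρ_i L(w) (x_k - x_i) / ((t - x̂_i) (1 + B))`.
The three smallness assumptions make `t - x_i` and `t - x̂_i` comparable to `x_i - x_k`, which
bounds `u_i`, `B` and `A - B`, and `|log (1 + y) - y| ≤ y² / (2 (1 - |y|))` bounds `L - 1`.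
-/

open Finset

noncomputable section

def logQuot (y : ℝ) : ℝ := if y = 0 then 1 else Real.log (1 + y) / y

lemma logQuot_mul_self (y : ℝ) : logQuot y * y = Real.log (1 + y) := by
  unfold logQuot
  split_ifs with h
  · simp [h]
  · field_simp

lemma abs_log_one_add_sub_self_le {y : ℝ} (hy : |y| < 1) :
    |Real.log (1 + y) - y| ≤ y ^ 2 * (1 - |y|)⁻¹ / 2 := by
  have h := Complex.norm_log_one_add_sub_self_le (z := y) (by simpa using hy)
  rw [← Complex.ofReal_one, ← Complex.ofReal_add,
    ← Complex.ofReal_log (by linarith [neg_abs_le y]), ← Complex.ofReal_sub,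
    Complex.norm_real, Complex.norm_real] at h
  simpa using h

lemma abs_logQuot_sub_one_le {c y : ℝ} (hc : c < 1) (hy : |y| ≤ c) :
    |logQuot y - 1| ≤ |y| / (2 * (1 - c)) := by
  unfold logQuot
  split_ifs with h
  · simp [h]
  have hy0 : 0 < |y| := abs_pos.2 h
  calc |Real.log (1 + y) / y - 1| = |Real.log (1 + y) - y| / |y| := by
        rw [← abs_div, sub_div, div_self h]
    _ ≤ y ^ 2 * (1 - |y|)⁻¹ / 2 / |y| := by
        gcongr
        exact abs_log_one_add_sub_self_le (hy.trans_lt hc)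
    _ = |y| / (2 * (1 - |y|)) := by
        rw [← sq_abs]
        field_simp
    _ ≤ |y| / (2 * (1 - c)) := by
        gcongr

lemma ne_zero_of_abs_le_mul_abs {D q M : ℝ} (hD : D ≠ 0) (h : |D| ≤ M * |q|) : q ≠ 0 := by
  rintro rfl
  rw [abs_zero, mul_zero, abs_nonpos_iff] at h
  exact hD h

lemma abs_div_le_mul_abs_div {p q D M : ℝ} (hD : D ≠ 0) (h : |D| ≤ M * |q|) :
    |p / q| ≤ M * |p / D| := by
  have hq := ne_zero_of_abs_le_mul_abs hD h
  rw [abs_div, abs_div, div_le_iff₀ (abs_pos.2 hq), mul_div_assoc', div_mul_eq_mul_div,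
    le_div_iff₀ (abs_pos.2 hD)]
  nlinarith [abs_nonneg p]

lemma abs_le_mul_abs_of_abs_div_le {p D ε : ℝ} (hD : D ≠ 0) (h : |p / D| ≤ ε) :
    |p| ≤ ε * |D| := by
  rwa [abs_div, div_le_iff₀ (abs_pos.2 hD)] at h

section

variable {ι : Type*}

def nodeShiftRatio (x xh : ι → ℝ) (t : ℝ) (i : ι) : ℝ := (xh i - x i) / (t - x i)

def betaCoeff (k : ι) (x xh : ι → ℝ) (t : ℝ) (i : ι) : ℝ :=
  logQuot (-nodeShiftRatio x xh t i) * ((x k - x i) / (t - x i))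

variable {k i : ι} {x xh : ι → ℝ} {t : ℝ}

lemma sub_eq_mul_one_sub_nodeShiftRatio (ht : t ≠ x i) :
    t - xh i = (t - x i) * (1 - nodeShiftRatio x xh t i) := by
  unfold nodeShiftRatio
  field_simp [sub_ne_zero.2 ht]
  ring

lemma abs_node_sub_le (hxi : x i ≠ x k) (hd : |(t - x k) / (x i - x k)| ≤ 1 / 24) :
    |x i - x k| ≤ 24 / 23 * |t - x i| := by
  have htk := abs_le_mul_abs_of_abs_div_le (sub_ne_zero.2 hxi) hd
  have := abs_sub_le (x i) t (x k)
  rw [abs_sub_comm (x i) t] at this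
  linarith

lemma abs_node_sub_le_shifted (hxi : x i ≠ x k) (hd : |(t - x k) / (x i - x k)| ≤ 1 / 24)
    (ha : |(xh i - x i) / (x i - x k)| ≤ 1 / 24) :
    |x i - x k| ≤ 12 / 11 * |t - xh i| := by
  have hti := abs_node_sub_le hxi hd
  have hhi := abs_le_mul_abs_of_abs_div_le (sub_ne_zero.2 hxi) ha
  have := abs_sub_le t (xh i) (x i)
  linarith

lemma abs_nodeShiftRatio_le (hxi : x i ≠ x k) (hd : |(t - x k) / (x i - x k)| ≤ 1 / 24) :
    |nodeShiftRatio x xh t i| ≤ 24 / 23 * |(xh i - x i) / (x i - x k)| :=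
  abs_div_le_mul_abs_div (sub_ne_zero.2 hxi) (abs_node_sub_le hxi hd)

lemma abs_node_div_sub_sub_one_le (hxi : x i ≠ x k)
    (hd : |(t - x k) / (x i - x k)| ≤ 1 / 24) :
    |(x k - x i) / (t - x i) - 1| ≤ 24 / 23 * |(t - x k) / (x i - x k)| := by
  have hD := abs_node_sub_le hxi hd
  rw [div_sub_one (ne_zero_of_abs_le_mul_abs (sub_ne_zero.2 hxi) hD),
    show x k - x i - (t - x i) = -(t - x k) by ring, neg_div, abs_neg]
  exact abs_div_le_mul_abs_div (sub_ne_zero.2 hxi) hD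

lemma abs_node_div_sub_shifted_sub_one_le (hxi : x i ≠ x k)
    (hd : |(t - x k) / (x i - x k)| ≤ 1 / 24) (ha : |(xh i - x i) / (x i - x k)| ≤ 1 / 24) :
    |(x k - x i) / (t - xh i) - 1| ≤
      12 / 11 * (|(t - x k) / (x i - x k)| + |(xh i - x i) / (x i - x k)|) := by
  have hD := abs_node_sub_le_shifted hxi hd ha
  rw [div_sub_one (ne_zero_of_abs_le_mul_abs (sub_ne_zero.2 hxi) hD),
    show x k - x i - (t - xh i) = -((t - x k) - (xh i - x i)) by ring]
  refine (abs_div_le_mul_abs_div (sub_ne_zero.2 hxi) hD).trans ?_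
  gcongr
  rw [neg_div, abs_neg, sub_div]
  exact abs_sub _ _

lemma abs_ratio_shifted_sub_ratio_le (hxi : x i ≠ x k)
    (hd : |(t - x k) / (x i - x k)| ≤ 1 / 24) (ha : |(xh i - x i) / (x i - x k)| ≤ 1 / 24) :
    |(t - xh k) / (t - xh i) - (t - x k) / (t - x i)| ≤
      12 / 11 * |(xh k - x k) / (x i - x k)| +
        288 / 253 * (|(t - x k) / (x i - x k)| * |(xh i - x i) / (x i - x k)|) := by
  have hDne := sub_ne_zero.2 hxi
  have hD := abs_node_sub_le hxi hd
  have hDh := abs_node_sub_le_shifted hxi hd ha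
  have hti := ne_zero_of_abs_le_mul_abs hDne hD
  have hthi := ne_zero_of_abs_le_mul_abs hDne hDh
  have hsplit : (t - xh k) / (t - xh i) - (t - x k) / (t - x i) =
      -(xh k - x k) / (t - xh i) + (t - x k) / (t - x i) * ((xh i - x i) / (t - xh i)) := by
    field_simp
    ring
  calc |(t - xh k) / (t - xh i) - (t - x k) / (t - x i)|
      ≤ |-(xh k - x k) / (t - xh i)| + |(t - x k) / (t - x i)| * |(xh i - x i) / (t - xh i)| := by
        rw [hsplit, ← abs_mul]
        exact abs_add_le _ _
    _ ≤ 12 / 11 * |-(xh k - x k) / (x i - x k)| +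
          (24 / 23 * |(t - x k) / (x i - x k)|) * (12 / 11 * |(xh i - x i) / (x i - x k)|) := by
        gcongr
        · exact abs_div_le_mul_abs_div hDne hDh
        · exact abs_div_le_mul_abs_div hDne hD
        · exact abs_div_le_mul_abs_div hDne hDh
    _ = _ := by
        rw [neg_div, abs_neg]
        ring

variable [DecidableEq ι]

def nodePerturbation (s : Finset ι) (k : ι) (x xh : ι → ℝ) : ℝ :=
  ∑ i ∈ s.erase k, |(xh i - x i) / (x i - x k)|

def nodeDistance (s : Finset ι) (k : ι) (x : ι → ℝ) (y : ℝ) : ℝ :=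
  ∑ i ∈ s.erase k, |(y - x k) / (x i - x k)|

def ratioSum (s : Finset ι) (k : ι) (c y : ι → ℝ) (t : ℝ) : ℝ :=
  ∑ i ∈ s.erase k, c i / c k * ((t - y k) / (t - y i))

def ratioSumShift (s : Finset ι) (k : ι) (c x xh : ι → ℝ) (t : ℝ) : ℝ :=
  (ratioSum s k c xh t - ratioSum s k c x t) / (1 + ratioSum s k c x t)

def kappaCoeff (s : Finset ι) (k : ι) (c x xh : ι → ℝ) (t : ℝ) (i : ι) : ℝ :=
  c i / c k * logQuot (ratioSumShift s k c x xh t) *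
    ((x k - x i) / ((t - xh i) * (1 + ratioSum s k c x t)))

def roundingExponent (s : Finset ι) (k : ι) (x xh : ι → ℝ) (t : ℝ) (β κ : ι → ℝ) : ℝ :=
  ∑ i ∈ s.erase k, (β i * (xh i - x i) + κ i * (xh k - x k)) / (x k - x i)
    - ∑ i ∈ s.erase k, κ i * (t - x k) * (xh i - x i) / ((x k - x i) * (t - x i))

variable {s : Finset ι} {c : ι → ℝ}

lemma sub_mul_sum_div_sub (hk : k ∈ s) (ht : t ≠ x k) (hc : c k ≠ 0) :
    (t - x k) * ∑ i ∈ s, c i / (t - x i) = c k * (1 + ratioSum s k c x t) := by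
  rw [← add_sum_erase s _ hk, ratioSum, mul_add, mul_sum, mul_add, mul_one, mul_sum]
  congr 1
  · field_simp [sub_ne_zero.2 ht]
  · refine sum_congr rfl fun i _ => ?_
    field_simp

lemma prod_mul_sum_div_sub (hk : k ∈ s) (ht : t ≠ x k) (hc : c k ≠ 0) :
    (∏ i ∈ s, (t - x i)) * ∑ i ∈ s, c i / (t - x i) =
      c k * (∏ i ∈ s.erase k, (t - x i)) * (1 + ratioSum s k c x t) := by
  rw [← mul_prod_erase s _ hk, mul_comm (t - x k), mul_assoc, sub_mul_sum_div_sub hk ht hc]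
  ring

lemma roundingExponent_summand (hxi : x i ≠ x k) (hti : t ≠ x i) (hthi : t ≠ xh i)
    (hB : 1 + ratioSum s k c x t ≠ 0) :
    (betaCoeff k x xh t i * (xh i - x i) + kappaCoeff s k c x xh t i * (xh k - x k)) /
        (x k - x i)
      - kappaCoeff s k c x xh t i * (t - x k) * (xh i - x i) / ((x k - x i) * (t - x i))
      = -Real.log (1 - nodeShiftRatio x xh t i)
        - logQuot (ratioSumShift s k c x xh t) / (1 + ratioSum s k c x t) *
          (c i / c k * ((t - xh k) / (t - xh i) - (t - x k) / (t - x i))) := by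
  rw [sub_eq_add_neg 1, ← logQuot_mul_self]
  unfold betaCoeff kappaCoeff nodeShiftRatio
  field_simp [sub_ne_zero.2 hxi.symm, sub_ne_zero.2 hti, sub_ne_zero.2 hthi]
  ring

lemma roundingExponent_eq (hxk : ∀ i ∈ s.erase k, x i ≠ x k) (htx : ∀ i ∈ s.erase k, t ≠ x i)
    (htxh : ∀ i ∈ s.erase k, t ≠ xh i) (hB : 1 + ratioSum s k c x t ≠ 0) :
    roundingExponent s k x xh t (betaCoeff k x xh t) (kappaCoeff s k c x xh t) =
      -∑ i ∈ s.erase k, Real.log (1 - nodeShiftRatio x xh t i)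
        - Real.log (1 + ratioSumShift s k c x xh t) := by
  have hAB : ∑ i ∈ s.erase k, c i / c k * ((t - xh k) / (t - xh i) - (t - x k) / (t - x i)) =
      ratioSumShift s k c x xh t * (1 + ratioSum s k c x t) := by
    rw [ratioSumShift, div_mul_cancel₀ _ hB, ratioSum, ratioSum, ← sum_sub_distrib]
    exact sum_congr rfl fun i _ => mul_sub _ _ _
  rw [roundingExponent, ← sum_sub_distrib,
    sum_congr rfl fun i hi => roundingExponent_summand (hxk i hi) (htx i hi) (htxh i hi) hB,
    sum_sub_distrib, ← mul_sum, hAB, sum_neg_distrib, ← logQuot_mul_self]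
  field_simp

lemma prod_mul_sum_div_shifted_eq (hk : k ∈ s) (hxk : ∀ i ∈ s.erase k, x i ≠ x k)
    (htx : ∀ i ∈ s, t ≠ x i) (htxh : ∀ i ∈ s, t ≠ xh i) (hc : c k ≠ 0)
    (hu : ∀ i ∈ s.erase k, 0 < 1 - nodeShiftRatio x xh t i)
    (hB : 1 + ratioSum s k c x t ≠ 0) (hw : 0 < 1 + ratioSumShift s k c x xh t) :
    (∏ i ∈ s, (t - xh i)) * ∑ i ∈ s, c i / (t - xh i) =
      (∏ i ∈ s, (t - x i)) * (∑ i ∈ s, c i / (t - x i)) *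
        Real.exp (-roundingExponent s k x xh t (betaCoeff k x xh t) (kappaCoeff s k c x xh t)) := by
  have hexp : Real.exp (-roundingExponent s k x xh t (betaCoeff k x xh t)
      (kappaCoeff s k c x xh t)) =
      (1 + ratioSumShift s k c x xh t) * ∏ i ∈ s.erase k, (1 - nodeShiftRatio x xh t i) := by
    rw [roundingExponent_eq hxk (fun i hi => htx i (mem_of_mem_erase hi))
        (fun i hi => htxh i (mem_of_mem_erase hi)) hB, neg_sub, sub_neg_eq_add, Real.exp_add,
      Real.exp_log hw, Real.exp_sum, prod_congr rfl fun i hi => Real.exp_log (hu i hi)]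
  have hA : 1 + ratioSum s k c xh t =
      (1 + ratioSum s k c x t) * (1 + ratioSumShift s k c x xh t) := by
    rw [ratioSumShift]
    field_simp
    ring
  rw [prod_mul_sum_div_sub hk (htx k hk) hc, prod_mul_sum_div_sub hk (htxh k hk) hc, hexp, hA,
    prod_congr rfl fun i hi => sub_eq_mul_one_sub_nodeShiftRatio (htx i (mem_of_mem_erase hi)),
    prod_mul_distrib]
  ring

lemma abs_div_le_nodePerturbation (hi : i ∈ s.erase k) :
    |(xh i - x i) / (x i - x k)| ≤ nodePerturbation s k x xh :=
  single_le_sum (f := fun i => |(xh i - x i) / (x i - x k)|) (fun _ _ => abs_nonneg _) hi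

lemma abs_div_le_nodeDistance {y : ℝ} (hi : i ∈ s.erase k) :
    |(y - x k) / (x i - x k)| ≤ nodeDistance s k x y :=
  single_le_sum (f := fun i => |(y - x k) / (x i - x k)|) (fun _ _ => abs_nonneg _) hi

lemma abs_ratioSum_le (hxk : ∀ i ∈ s.erase k, x i ≠ x k)
    (hρ : ∀ i ∈ s.erase k, |c i / c k| ≤ 2) (hδt : nodeDistance s k x t ≤ 1 / 24) :
    |ratioSum s k c x t| ≤ 48 / 23 * nodeDistance s k x t := by
  calc |ratioSum s k c x t|
      ≤ ∑ i ∈ s.erase k, |c i / c k * ((t - x k) / (t - x i))| := abs_sum_le_sum_abs _ _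
    _ ≤ ∑ i ∈ s.erase k, 2 * (24 / 23 * |(t - x k) / (x i - x k)|) := by
        refine sum_le_sum fun i hi => ?_
        rw [abs_mul]
        gcongr
        · exact hρ i hi
        · exact abs_div_le_mul_abs_div (sub_ne_zero.2 (hxk i hi))
            (abs_node_sub_le (hxk i hi) ((abs_div_le_nodeDistance hi).trans hδt))
    _ = 48 / 23 * nodeDistance s k x t := by
        rw [← mul_sum, ← mul_sum, nodeDistance]
        ring

lemma le_one_add_ratioSum (hxk : ∀ i ∈ s.erase k, x i ≠ x k)
    (hρ : ∀ i ∈ s.erase k, |c i / c k| ≤ 2) (hδt : nodeDistance s k x t ≤ 1 / 24) :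
    21 / 23 ≤ 1 + ratioSum s k c x t := by
  have := abs_ratioSum_le hxk hρ hδt
  linarith [neg_abs_le (ratioSum s k c x t)]

lemma abs_ratioSum_sub_le (hxk : ∀ i ∈ s.erase k, x i ≠ x k)
    (hρ : ∀ i ∈ s.erase k, |c i / c k| ≤ 2) (hα : nodePerturbation s k x xh ≤ 1 / 24)
    (hδt : nodeDistance s k x t ≤ 1 / 24) :
    |ratioSum s k c xh t - ratioSum s k c x t| ≤
      24 / 11 * nodeDistance s k x (xh k) +
        576 / 253 * (nodePerturbation s k x xh * nodeDistance s k x t) := by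
  calc |ratioSum s k c xh t - ratioSum s k c x t|
      = |∑ i ∈ s.erase k, c i / c k * ((t - xh k) / (t - xh i) - (t - x k) / (t - x i))| := by
        rw [ratioSum, ratioSum, ← sum_sub_distrib]
        simp only [mul_sub]
    _ ≤ ∑ i ∈ s.erase k, 2 * (12 / 11 * |(xh k - x k) / (x i - x k)| +
          288 / 253 * (nodeDistance s k x t * |(xh i - x i) / (x i - x k)|)) := by
        refine (abs_sum_le_sum_abs _ _).trans (sum_le_sum fun i hi => ?_)
        have hd := abs_div_le_nodeDistance (x := x) (y := t) hi
        have ha := abs_div_le_nodePerturbation (x := x) (xh := xh) hi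
        rw [abs_mul]
        gcongr
        · exact hρ i hi
        · refine (abs_ratio_shifted_sub_ratio_le (hxk i hi) (hd.trans hδt) (ha.trans hα)).trans ?_
          gcongr
    _ = 24 / 11 * nodeDistance s k x (xh k) +
          576 / 253 * (nodePerturbation s k x xh * nodeDistance s k x t) := by
        simp only [mul_add, sum_add_distrib, ← mul_sum, nodeDistance, nodePerturbation]
        ring

lemma abs_ratioSumShift_le (hxk : ∀ i ∈ s.erase k, x i ≠ x k)
    (hρ : ∀ i ∈ s.erase k, |c i / c k| ≤ 2) (hα : nodePerturbation s k x xh ≤ 1 / 24)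
    (hδt : nodeDistance s k x t ≤ 1 / 24) :
    |ratioSumShift s k c x xh t| ≤
      184 / 77 * nodeDistance s k x (xh k) +
        192 / 77 * (nodePerturbation s k x xh * nodeDistance s k x t) := by
  have hB := le_one_add_ratioSum hxk hρ hδt
  have hB0 : 0 < 1 + ratioSum s k c x t := by linarith
  rw [ratioSumShift, abs_div, abs_of_pos hB0, div_le_iff₀ hB0]
  have hAB := abs_ratioSum_sub_le hxk hρ hα hδt
  nlinarith [abs_nonneg (ratioSum s k c xh t - ratioSum s k c x t)]

lemma abs_ratioSumShift_le_const (hxk : ∀ i ∈ s.erase k, x i ≠ x k)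
    (hρ : ∀ i ∈ s.erase k, |c i / c k| ≤ 2) (hα : nodePerturbation s k x xh ≤ 1 / 24)
    (hδk : nodeDistance s k x (xh k) ≤ 1 / 24) (hδt : nodeDistance s k x t ≤ 1 / 24) :
    |ratioSumShift s k c x xh t| ≤ 8 / 77 := by
  have hαδ : nodePerturbation s k x xh * nodeDistance s k x t ≤ 1 / 24 * (1 / 24) :=
    mul_le_mul hα hδt (sum_nonneg fun _ _ => abs_nonneg _) (by norm_num)
  linarith [abs_ratioSumShift_le hxk hρ hα hδt]

lemma abs_logQuot_ratioSumShift_sub_one_le (hxk : ∀ i ∈ s.erase k, x i ≠ x k)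
    (hρ : ∀ i ∈ s.erase k, |c i / c k| ≤ 2) (hα : nodePerturbation s k x xh ≤ 1 / 24)
    (hδk : nodeDistance s k x (xh k) ≤ 1 / 24) (hδt : nodeDistance s k x t ≤ 1 / 24) :
    |logQuot (ratioSumShift s k c x xh t) - 1| ≤
      4 / 3 * nodeDistance s k x (xh k) +
        32 / 23 * (nodePerturbation s k x xh * nodeDistance s k x t) := by
  refine (abs_logQuot_sub_one_le (by norm_num)
    (abs_ratioSumShift_le_const hxk hρ hα hδk hδt)).trans ?_
  rw [div_le_iff₀ (by norm_num)]
  linarith [abs_ratioSumShift_le hxk hρ hα hδt]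

lemma prod_mul_sum_div_shifted_eq_of_small (hk : k ∈ s)
    (hxk : ∀ i ∈ s.erase k, x i ≠ x k) (htx : ∀ i ∈ s, t ≠ x i) (htxh : ∀ i ∈ s, t ≠ xh i)
    (hc : c k ≠ 0) (hρ : ∀ i ∈ s.erase k, |c i / c k| ≤ 2)
    (hα : nodePerturbation s k x xh ≤ 1 / 24) (hδk : nodeDistance s k x (xh k) ≤ 1 / 24)
    (hδt : nodeDistance s k x t ≤ 1 / 24) :
    (∏ i ∈ s, (t - xh i)) * ∑ i ∈ s, c i / (t - xh i) =
      (∏ i ∈ s, (t - x i)) * (∑ i ∈ s, c i / (t - x i)) *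
        Real.exp (-roundingExponent s k x xh t (betaCoeff k x xh t) (kappaCoeff s k c x xh t)) := by
  have hu : ∀ i ∈ s.erase k, 0 < 1 - nodeShiftRatio x xh t i := fun i hi => by
    have := abs_nodeShiftRatio_le (xh := xh) (hxk i hi)
      ((abs_div_le_nodeDistance hi).trans hδt)
    linarith [le_abs_self (nodeShiftRatio x xh t i),
      abs_div_le_nodePerturbation (x := x) (xh := xh) hi]
  have hB := le_one_add_ratioSum hxk hρ hδt
  have hw := abs_ratioSumShift_le_const hxk hρ hα hδk hδt
  exact prod_mul_sum_div_shifted_eq hk hxk htx htxh hc hu (by linarith)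
    (by linarith [neg_abs_le (ratioSumShift s k c x xh t)])

lemma abs_betaCoeff_sub_one_le (hxk : ∀ i ∈ s.erase k, x i ≠ x k)
    (hα : nodePerturbation s k x xh ≤ 1 / 24) (hδt : nodeDistance s k x t ≤ 1 / 24)
    (hi : i ∈ s.erase k) :
    |betaCoeff k x xh t i - 1| ≤ 1.05 * nodeDistance s k x t + 0.6 * nodePerturbation s k x xh := by
  have hd := abs_div_le_nodeDistance (x := x) (y := t) hi
  have ha := abs_div_le_nodePerturbation (x := x) (xh := xh) hi
  have hθ := abs_node_div_sub_sub_one_le (hxk i hi) (hd.trans hδt)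
  have hθ' : |(x k - x i) / (t - x i)| ≤ 24 / 23 := by
    have := abs_sub_abs_le_abs_sub ((x k - x i) / (t - x i)) 1
    rw [abs_one] at this
    linarith
  have hu := abs_nodeShiftRatio_le (xh := xh) (hxk i hi) (hd.trans hδt)
  have hg : |logQuot (-nodeShiftRatio x xh t i) - 1| ≤ 6 / 11 * |(xh i - x i) / (x i - x k)| := by
    refine (abs_logQuot_sub_one_le (c := 1 / 23) (by norm_num) ?_).trans ?_ <;> rw [abs_neg]
    · linarith
    · rw [div_le_iff₀ (by norm_num)]
      linarith
  calc |betaCoeff k x xh t i - 1|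
      = |(logQuot (-nodeShiftRatio x xh t i) - 1) * ((x k - x i) / (t - x i)) +
          ((x k - x i) / (t - x i) - 1)| := by
        rw [betaCoeff]
        ring_nf
    _ ≤ 6 / 11 * |(xh i - x i) / (x i - x k)| * (24 / 23) +
          24 / 23 * |(t - x k) / (x i - x k)| := by
        refine (abs_add_le _ _).trans ?_
        rw [abs_mul]
        gcongr
    _ ≤ 1.05 * nodeDistance s k x t + 0.6 * nodePerturbation s k x xh := by
        norm_num
        linarith [abs_nonneg ((xh i - x i) / (x i - x k)), abs_nonneg ((t - x k) / (x i - x k))]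

lemma abs_kappaCoeff_sub_le (hxk : ∀ i ∈ s.erase k, x i ≠ x k)
    (hρ : ∀ i ∈ s.erase k, |c i / c k| ≤ 2) (hα : nodePerturbation s k x xh ≤ 1 / 24)
    (hδk : nodeDistance s k x (xh k) ≤ 1 / 24) (hδt : nodeDistance s k x t ≤ 1 / 24)
    (hi : i ∈ s.erase k) :
    |kappaCoeff s k c x xh t i - c i / c k| ≤
      2.4 * nodePerturbation s k x xh + 7.2 * nodeDistance s k x t
        + 4 * nodeDistance s k x (xh k)
        + 4 * nodePerturbation s k x xh * nodeDistance s k x t := by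
  set B := ratioSum s k c x t
  set h := logQuot (ratioSumShift s k c x xh t)
  set C := (x k - x i) / (t - xh i)
  have hd := abs_div_le_nodeDistance (x := x) (y := t) hi
  have ha := abs_div_le_nodePerturbation (x := x) (xh := xh) hi
  have hB0 : 0 < 1 + B := by linarith [le_one_add_ratioSum hxk hρ hδt]
  have hC1 : |C - 1| ≤ 12 / 11 * (nodeDistance s k x t + nodePerturbation s k x xh) :=
    (abs_node_div_sub_shifted_sub_one_le (hxk i hi) (hd.trans hδt) (ha.trans hα)).trans
      (by gcongr)
  have hC : |C| ≤ 12 / 11 := by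
    have := abs_sub_abs_le_abs_sub C 1
    rw [abs_one] at this
    linarith
  have hκ : kappaCoeff s k c x xh t i - c i / c k =
      c i / c k * (((h - 1) * C + (C - 1) - B) / (1 + B)) := by
    rw [show (h - 1) * C + (C - 1) - B = h * C - (1 + B) by ring, sub_div, div_self hB0.ne',
      kappaCoeff, ← div_div]
    ring
  have hnum : |(h - 1) * C + (C - 1) - B| ≤ 12 / 11 * |h - 1| + |C - 1| + |B| := by
    have h1 := abs_sub ((h - 1) * C + (C - 1)) B
    have h2 := abs_add_le ((h - 1) * C) (C - 1)
    have h3 := mul_le_mul_of_nonneg_left hC (abs_nonneg (h - 1))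
    rw [abs_mul] at h2
    linarith
  calc |kappaCoeff s k c x xh t i - c i / c k|
      = |c i / c k| * (|(h - 1) * C + (C - 1) - B| / (1 + B)) := by
        rw [hκ, abs_mul, abs_div _ (1 + B), abs_of_pos hB0]
    _ ≤ 2 * (23 / 21 * (12 / 11 * |h - 1| + |C - 1| + |B|)) := by
        gcongr
        · exact hρ i hi
        · rw [div_le_iff₀ hB0]
          nlinarith [le_one_add_ratioSum hxk hρ hδt, abs_nonneg (h - 1), abs_nonneg (C - 1),
            abs_nonneg B]
    _ ≤ _ := by
        have hh := abs_logQuot_ratioSumShift_sub_one_le hxk hρ hα hδk hδt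
        have hB := abs_ratioSum_le hxk hρ hδt
        have hα0 : 0 ≤ nodePerturbation s k x xh := sum_nonneg fun _ _ => abs_nonneg _
        have hδt0 : 0 ≤ nodeDistance s k x t := sum_nonneg fun _ _ => abs_nonneg _
        have hδk0 : 0 ≤ nodeDistance s k x (xh k) := sum_nonneg fun _ _ => abs_nonneg _
        norm_num
        nlinarith [mul_nonneg hα0 hδt0]

end

end

lemma neg_cos_mul_pi_div_lt {n i j : ℕ} (hj : j ≤ n) (hij : i < j) :
    -Real.cos (i * Real.pi / n) < -Real.cos (j * Real.pi / n) := by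
  have hn : (0 : ℝ) < n := by exact_mod_cast (Nat.zero_le i).trans_lt (hij.trans_le hj)
  rw [neg_lt_neg_iff]
  apply Real.cos_lt_cos_of_nonneg_of_le_pi (by positivity)
  · rw [div_le_iff₀ hn, mul_comm]
    gcongr
  · gcongr

lemma abs_le_one_of_simplified_weights {n i : ℕ} {γ : ℕ → ℝ} (hγ0 : γ 0 = 1 / 2)
    (hγn : γ n = (-1 : ℝ) ^ n / 2) (hγ : ∀ i, 0 < i → i < n → γ i = (-1 : ℝ) ^ i)
    (hi : i ≤ n) : |γ i| ≤ 1 := by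
  rcases Nat.eq_zero_or_pos i with rfl | hi0
  · rw [hγ0]; norm_num
  rcases hi.lt_or_eq with hin | rfl
  · rw [hγ i hi0 hin]; simp
  · rw [hγn, abs_div, abs_pow, abs_neg, abs_one, one_pow]
    norm_num

lemma abs_mul_div_mul_le_two {a b u v : ℝ} (ha : |a| ≤ 1) (hb : |b| = 1) (hv : v ≠ 0)
    (hu : |u| ≤ 2 * |v|) : |a * u / (b * v)| ≤ 2 := by
  rw [abs_div, abs_mul, abs_mul, hb, one_mul, div_le_iff₀ (abs_pos.2 hv)]
  nlinarith [abs_nonneg a, abs_nonneg u]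

theorem first_formula_rounded_nodes_general
    (n k : ℕ) (hk1 : 1 ≤ k) (hkn : k < n)
    (x xh γ f : ℕ → ℝ)
    (hx : ∀ i ≤ n, x i = -Real.cos (i * Real.pi / n))
    (hγ0 : γ 0 = 1 / 2) (hγn : γ n = (-1 : ℝ) ^ n / 2)
    (hγ : ∀ i, 0 < i → i < n → γ i = (-1 : ℝ) ^ i)
    (hfk : f k ≠ 0)
    (hfk2 : ((Finset.range (n + 1)).sup'
              ⟨0, Finset.mem_range.mpr n.succ_pos⟩ fun j => |f j|) / 2 ≤ |f k|)
    (t : ℝ)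
    (htx : ∀ i ≤ n, t ≠ x i) (htxh : ∀ i ≤ n, t ≠ xh i)
    (hα : ∑ i ∈ (Finset.range (n + 1)).erase k, |(xh i - x i) / (x i - x k)| ≤ 1 / 24)
    (hδk : ∑ i ∈ (Finset.range (n + 1)).erase k, |(xh k - x k) / (x i - x k)| ≤ 1 / 24)
    (hδt : ∑ i ∈ (Finset.range (n + 1)).erase k, |(t - x k) / (x i - x k)| ≤ 1 / 24) :
    ∃ β κ : ℕ → ℝ,
      ((-1 : ℝ) ^ n / n * 2 ^ (n - 1) * (∏ i ∈ Finset.range (n + 1), (t - xh i)) *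
          ∑ i ∈ Finset.range (n + 1), γ i * f i / (t - xh i))
        = ((-1 : ℝ) ^ n / n * 2 ^ (n - 1) * (∏ i ∈ Finset.range (n + 1), (t - x i)) *
            ∑ i ∈ Finset.range (n + 1), γ i * f i / (t - x i))
          * Real.exp
              (-((∑ i ∈ (Finset.range (n + 1)).erase k,
                    (β i * (xh i - x i) + κ i * (xh k - x k)) / (x k - x i))
                 - ∑ i ∈ (Finset.range (n + 1)).erase k,
                    κ i * (t - x k) * (xh i - x i) / ((x k - x i) * (t - x i))))
      ∧ (∀ i ∈ (Finset.range (n + 1)).erase k,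
          |β i - 1| ≤
            1.05 * (∑ j ∈ (Finset.range (n + 1)).erase k, |(t - x k) / (x j - x k)|)
            + 0.6 * (∑ j ∈ (Finset.range (n + 1)).erase k, |(xh j - x j) / (x j - x k)|))
      ∧ (∀ i ∈ (Finset.range (n + 1)).erase k,
          |κ i - γ i * f i / (γ k * f k)| ≤
            2.4 * (∑ j ∈ (Finset.range (n + 1)).erase k, |(xh j - x j) / (x j - x k)|)
            + 7.2 * (∑ j ∈ (Finset.range (n + 1)).erase k, |(t - x k) / (x j - x k)|)
            + 4 * (∑ j ∈ (Finset.range (n + 1)).erase k, |(xh k - x k) / (x j - x k)|)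
            + 4 * (∑ j ∈ (Finset.range (n + 1)).erase k, |(xh j - x j) / (x j - x k)|)
                * (∑ j ∈ (Finset.range (n + 1)).erase k, |(t - x k) / (x j - x k)|)) := by
  have hle : ∀ i ∈ range (n + 1), i ≤ n := fun i hi => Nat.lt_succ_iff.1 (mem_range.1 hi)
  have hk : k ∈ range (n + 1) := mem_range.2 (by omega)
  have hxk : ∀ i ∈ (range (n + 1)).erase k, x i ≠ x k := by
    intro i hi
    have hin := hle i (mem_of_mem_erase hi)
    rw [hx i hin, hx k hkn.le]
    rcases (ne_of_mem_erase hi).lt_or_gt with h | h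
    · exact (neg_cos_mul_pi_div_lt hkn.le h).ne
    · exact (neg_cos_mul_pi_div_lt hin h).ne'
  have hγk : |γ k| = 1 := by rw [hγ k hk1 hkn]; simp
  have hρ : ∀ i ∈ (range (n + 1)).erase k, |γ i * f i / (γ k * f k)| ≤ 2 := fun i hi =>
    abs_mul_div_mul_le_two
      (abs_le_one_of_simplified_weights hγ0 hγn hγ (hle i (mem_of_mem_erase hi))) hγk hfk
      (by linarith [le_sup' (fun j => |f j|) (mem_of_mem_erase hi)])
  have hc : γ k * f k ≠ 0 := mul_ne_zero (abs_pos.1 (by rw [hγk]; exact one_pos)) hfk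
  have key := prod_mul_sum_div_shifted_eq_of_small (c := fun i => γ i * f i) hk hxk
    (fun i hi => htx i (hle i hi)) (fun i hi => htxh i (hle i hi)) hc hρ hα hδk hδt
  refine ⟨betaCoeff k x xh t, kappaCoeff (range (n + 1)) k (fun i => γ i * f i) x xh t, ?_,
    fun i hi => abs_betaCoeff_sub_one_le hxk hα hδt hi,
    fun i hi => abs_kappaCoeff_sub_le hxk hρ hα hδk hδt hi⟩
  rw [roundingExponent] at key
  rw [mul_assoc _ (∏ i ∈ range (n + 1), (t - xh i)), key]
  ring

/-- Lemma on the effect of node rounding on the first barycentric formula at the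
Chebyshev points of the second kind: `ã(t, x̂) = a(t)·exp(-r_{n,k}(t, x̂))` with
almost-constant coefficients `β_{n,k,i}` and `κ_{n,k,i}`. -/
theorem first_formula_rounded_nodes
    (n k : ℕ) (hn : 2 ≤ n) (hk1 : 1 ≤ k) (hkn : k < n)
    (x xh γ f : ℕ → ℝ)
    (hx : ∀ i ≤ n, x i = -Real.cos (i * Real.pi / n))
    (hγ0 : γ 0 = 1 / 2) (hγn : γ n = (-1 : ℝ) ^ n / 2)
    (hγ : ∀ i, 0 < i → i < n → γ i = (-1 : ℝ) ^ i)
    (hfk : f k ≠ 0)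
    (hfk2 : ((Finset.range (n + 1)).sup'
              ⟨0, Finset.mem_range.mpr n.succ_pos⟩ fun j => |f j|) / 2 ≤ |f k|)
    (t : ℝ) (ht : t ∈ Set.Icc (-1 : ℝ) 1)
    (htx : ∀ i ≤ n, t ≠ x i) (htxh : ∀ i ≤ n, t ≠ xh i)
    (hα : ∑ i ∈ (Finset.range (n + 1)).erase k, |(xh i - x i) / (x i - x k)| ≤ 1 / 24)
    (hδk : ∑ i ∈ (Finset.range (n + 1)).erase k, |(xh k - x k) / (x i - x k)| ≤ 1 / 24)
    (hδt : ∑ i ∈ (Finset.range (n + 1)).erase k, |(t - x k) / (x i - x k)| ≤ 1 / 24) :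
    ∃ β κ : ℕ → ℝ,
      ((-1 : ℝ) ^ n / n * 2 ^ (n - 1) * (∏ i ∈ Finset.range (n + 1), (t - xh i)) *
          ∑ i ∈ Finset.range (n + 1), γ i * f i / (t - xh i))
        = ((-1 : ℝ) ^ n / n * 2 ^ (n - 1) * (∏ i ∈ Finset.range (n + 1), (t - x i)) *
            ∑ i ∈ Finset.range (n + 1), γ i * f i / (t - x i))
          * Real.exp
              (-((∑ i ∈ (Finset.range (n + 1)).erase k,
                    (β i * (xh i - x i) + κ i * (xh k - x k)) / (x k - x i))
                 - ∑ i ∈ (Finset.range (n + 1)).erase k,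
                    κ i * (t - x k) * (xh i - x i) / ((x k - x i) * (t - x i))))
      ∧ (∀ i ∈ (Finset.range (n + 1)).erase k,
          |β i - 1| ≤
            1.05 * (∑ j ∈ (Finset.range (n + 1)).erase k, |(t - x k) / (x j - x k)|)
            + 0.6 * (∑ j ∈ (Finset.range (n + 1)).erase k, |(xh j - x j) / (x j - x k)|))
      ∧ (∀ i ∈ (Finset.range (n + 1)).erase k,
          |κ i - γ i * f i / (γ k * f k)| ≤
            2.4 * (∑ j ∈ (Finset.range (n + 1)).erase k, |(xh j - x j) / (x j - x k)|)
            + 7.2 * (∑ j ∈ (Finset.range (n + 1)).erase k, |(t - x k) / (x j - x k)|)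
            + 4 * (∑ j ∈ (Finset.range (n + 1)).erase k, |(xh k - x k) / (x j - x k)|)
            + 4 * (∑ j ∈ (Finset.range (n + 1)).erase k, |(xh j - x j) / (x j - x k)|)
                * (∑ j ∈ (Finset.range (n + 1)).erase k, |(t - x k) / (x j - x k)|)) :=
  first_formula_rounded_nodes_general n k hk1 hkn x xh γ f hx hγ0 hγn hγ hfk hfk2 t htx htxh hα hδk
    hδt
end

section
/- Let n ≥ 2, let 1 ≤ k < n, let x_i = −cos(iπ/n) for i = 0,…,n, let γ be the simplified weights, and let f_0,…,f_n be reals with f_k ≠ 0 and |f_k| ≥ (max_{0≤j≤n} |f_j|)/2. Let t ∈ [−1,1] with t ≠ x_i for all i ≠ k, and assume δ_{n,k}(t) ≤ 1/24. Setting θ_{n,k,i} = γ_i f_i/(γ_k f_k) and s(t) = 1 + Σ_{i≠k} θ_{n,k,i}·(t − x_k)/(t − x_i), one has |s(t) − 1| ≤ 2/23. -/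
/-!
Each summand of `s(t) - 1` is `θ_{n,k,i} · (t - x_k)/(t - x_i)`. The weights have modulus at
most one, with `|γ_k| = 1` because `k` is an interior index, and `|f_i| ≤ 2|f_k|`, so
`|θ_{n,k,i}| ≤ 2`. Each term of `δ_{n,k}(t)` is at most `1/24`, i.e. `|t - x_k| ≤ |x_i - x_k|/24`
(the nodes are distinct), so `|t - x_i| ≥ (23/24)|x_i - x_k|` and
`|(t - x_k)/(t - x_i)| ≤ (24/23)|(t - x_k)/(x_i - x_k)|`. Summing gives
`|s(t) - 1| ≤ 2 · (24/23) · δ_{n,k}(t) ≤ 2/23`.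
-/

open Finset Real

lemma injOn_neg_cos_mul_pi_div {n : ℕ} (hn : 0 < n) :
    Set.InjOn (fun i : ℕ => -cos (i * π / n)) (Set.Iic n) := by
  have hmem : ∀ m ∈ Set.Iic n, (m * π / n : ℝ) ∈ Set.Icc 0 π := by
    intro m hm
    have hm' : (m : ℝ) ≤ n := by exact_mod_cast hm
    refine ⟨by positivity, ?_⟩
    rw [div_le_iff₀ (by positivity)]
    nlinarith [pi_pos]
  intro i hi j hj hij
  have hcos := injOn_cos (hmem i hi) (hmem j hj) (neg_inj.mp hij)
  field_simp at hcos
  exact_mod_cast hcos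

lemma abs_div_sub_le_of_abs_div_le {t y z ε : ℝ} (hzy : z ≠ y) (hε : ε < 1)
    (h : |(t - y) / (z - y)| ≤ ε) :
    |(t - y) / (t - z)| ≤ |(t - y) / (z - y)| / (1 - ε) := by
  have hzy' : 0 < |z - y| := abs_pos.mpr (sub_ne_zero.mpr hzy)
  rw [abs_div] at h
  have hty : |t - y| ≤ ε * |z - y| := (div_le_iff₀ hzy').mp h
  have htz : (1 - ε) * |z - y| ≤ |t - z| := by
    have := abs_sub_abs_le_abs_sub (z - y) (z - t)
    rw [sub_sub_sub_cancel_left, abs_sub_comm z t] at this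
    linarith
  rw [abs_div, abs_div, div_div, mul_comm]
  exact div_le_div_of_nonneg_left (abs_nonneg _)
    (mul_pos (sub_pos.mpr hε) hzy') htz

lemma abs_mul_div_mul_le {a b c d C : ℝ} (hC : 0 ≤ C) (hab : |a| ≤ |b|) (hcd : |c| ≤ C * |d|) :
    |a * c / (b * d)| ≤ C := by
  rw [abs_div, abs_mul, abs_mul]
  refine div_le_of_le_mul₀ (by positivity) hC ?_
  calc |a| * |c| ≤ |b| * (C * |d|) := mul_le_mul hab hcd (abs_nonneg _) (abs_nonneg _)
    _ = C * (|b| * |d|) := by ring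

lemma abs_sum_mul_le {ι : Type*} (s : Finset ι) (θ r : ι → ℝ) {C : ℝ}
    (hθ : ∀ i ∈ s, |θ i| ≤ C) : |∑ i ∈ s, θ i * r i| ≤ C * ∑ i ∈ s, |r i| := by
  rw [mul_sum]
  refine (abs_sum_le_sum_abs _ _).trans (sum_le_sum fun i hi => ?_)
  rw [abs_mul]
  exact mul_le_mul_of_nonneg_right (hθ i hi) (abs_nonneg _)

lemma abs_simplifiedWeight_le_one {n : ℕ} {γ : ℕ → ℝ} (hγ0 : γ 0 = 1 / 2)
    (hγn : γ n = (-1 : ℝ) ^ n / 2) (hγ : ∀ i, 0 < i → i < n → γ i = (-1 : ℝ) ^ i)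
    {i : ℕ} (hi : i ≤ n) : |γ i| ≤ 1 := by
  rcases Nat.eq_zero_or_pos i with rfl | hi0
  · norm_num [hγ0]
  rcases hi.eq_or_lt with rfl | hin
  · norm_num [hγn, abs_div]
  · simp [hγ i hi0 hin]

theorem s_close_to_one_general
    (n k : ℕ) (hk1 : 1 ≤ k) (hkn : k < n)
    (x γ f : ℕ → ℝ)
    (hx : ∀ i ≤ n, x i = -Real.cos (i * Real.pi / n))
    (hγ0 : γ 0 = 1 / 2) (hγn : γ n = (-1 : ℝ) ^ n / 2)
    (hγ : ∀ i, 0 < i → i < n → γ i = (-1 : ℝ) ^ i)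
    (hfk2 : ((Finset.range (n + 1)).sup'
              ⟨0, Finset.mem_range.mpr n.succ_pos⟩ fun j => |f j|) / 2 ≤ |f k|)
    (t : ℝ)
    (hδt : ∑ i ∈ (Finset.range (n + 1)).erase k, |(t - x k) / (x i - x k)| ≤ 1 / 24) :
    |(1 + ∑ i ∈ (Finset.range (n + 1)).erase k,
        γ i * f i / (γ k * f k) * ((t - x k) / (t - x i))) - 1| ≤ 2 / 23 := by
  set S := (range (n + 1)).erase k
  have hS : ∀ i ∈ S, i ≠ k ∧ i ≤ n := fun i hi =>
    ⟨ne_of_mem_erase hi, Nat.lt_succ_iff.mp (mem_range.mp (mem_of_mem_erase hi))⟩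
  have hθ : ∀ i ∈ S, |γ i * f i / (γ k * f k)| ≤ 2 := fun i hi =>
    abs_mul_div_mul_le zero_le_two
      (by simpa [hγ k hk1 hkn] using abs_simplifiedWeight_le_one hγ0 hγn hγ (hS i hi).2)
      (by linarith [le_sup' (fun j => |f j|) (mem_range.mpr (Nat.lt_succ_of_le (hS i hi).2))])
  have hr : ∀ i ∈ S, |(t - x k) / (t - x i)| ≤ |(t - x k) / (x i - x k)| / (1 - 1 / 24) := by
    intro i hi
    obtain ⟨hik, hin⟩ := hS i hi
    refine abs_div_sub_le_of_abs_div_le ?_ (by norm_num)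
      ((single_le_sum (fun j _ => abs_nonneg ((t - x k) / (x j - x k))) hi).trans hδt)
    rw [hx i hin, hx k hkn.le]
    exact fun h => hik (injOn_neg_cos_mul_pi_div (by omega) hin hkn.le h)
  calc _ = |∑ i ∈ S, γ i * f i / (γ k * f k) * ((t - x k) / (t - x i))| := by
        rw [add_sub_cancel_left]
    _ ≤ 2 * ∑ i ∈ S, |(t - x k) / (t - x i)| := abs_sum_mul_le S _ _ hθ
    _ ≤ 2 * ∑ i ∈ S, |(t - x k) / (x i - x k)| / (1 - 1 / 24) := by gcongr with i hi; exact hr i hi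
    _ = 48 / 23 * ∑ i ∈ S, |(t - x k) / (x i - x k)| := by rw [← sum_div]; ring
    _ ≤ 2 / 23 := by linarith

/-- Bound `|s(t) - 1| ≤ 2/23` for `s(t) = 1 + Σ_{i≠k} θ_{n,k,i}(t-x_k)/(t-x_i)`
with `θ_{n,k,i} = γ_i f_i/(γ_k f_k)`, at the Chebyshev points of the second
kind, under `|f_k| ≥ max|f_j|/2` and `δ_{n,k}(t) ≤ 1/24`. -/
theorem s_close_to_one
    (n k : ℕ) (hn : 2 ≤ n) (hk1 : 1 ≤ k) (hkn : k < n)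
    (x γ f : ℕ → ℝ)
    (hx : ∀ i ≤ n, x i = -Real.cos (i * Real.pi / n))
    (hγ0 : γ 0 = 1 / 2) (hγn : γ n = (-1 : ℝ) ^ n / 2)
    (hγ : ∀ i, 0 < i → i < n → γ i = (-1 : ℝ) ^ i)
    (hfk : f k ≠ 0)
    (hfk2 : ((Finset.range (n + 1)).sup'
              ⟨0, Finset.mem_range.mpr n.succ_pos⟩ fun j => |f j|) / 2 ≤ |f k|)
    (t : ℝ) (ht : t ∈ Set.Icc (-1 : ℝ) 1)
    (htx : ∀ i ≤ n, i ≠ k → t ≠ x i)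
    (hδt : ∑ i ∈ (Finset.range (n + 1)).erase k, |(t - x k) / (x i - x k)| ≤ 1 / 24) :
    |(1 + ∑ i ∈ (Finset.range (n + 1)).erase k,
        γ i * f i / (γ k * f k) * ((t - x k) / (t - x i))) - 1| ≤ 2 / 23 :=
  s_close_to_one_general n k hk1 hkn x γ f hx hγ0 hγn hγ hfk2 t hδt
end

section
/- Let n ≥ 2 and let i be an integer with n/2 < i < n. For the Chebyshev points of the second kind x_j = −cos(jπ/n), one has x_{i+1} ≤ 3·x_i. -/
open Real

/- With `θ = iπ/n - π/2` and `h = π/n` the two nodes are `x_i = sin θ` and `x_{i+1} = sin (θ + h)`,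
and `i > n/2` says exactly `h ≤ 2θ`. Then `sin (θ + h) ≤ sin θ + sin h`, and
`sin h ≤ 2 sin (h/2) ≤ 2 sin θ` by the double angle formula and monotonicity of `sin`. -/

lemma Real.sin_le_two_mul_sin_half {x : ℝ} (hx : 0 ≤ sin (x / 2)) : sin x ≤ 2 * sin (x / 2) := by
  have hsin : sin x = 2 * sin (x / 2) * cos (x / 2) := by
    rw [← sin_two_mul, mul_div_cancel₀ x two_ne_zero]
  rw [hsin]
  exact mul_le_of_le_one_right (by positivity) (cos_le_one _)

lemma Real.sin_add_le_three_mul_sin {θ h : ℝ} (hh : 0 ≤ h) (hθh : h ≤ 2 * θ) (hθ : θ ≤ π / 2) :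
    sin (θ + h) ≤ 3 * sin θ := by
  have hsinθ : 0 ≤ sin θ := sin_nonneg_of_nonneg_of_le_pi (by linarith) (by linarith)
  have hsinh : 0 ≤ sin h := sin_nonneg_of_nonneg_of_le_pi hh (by linarith)
  have hhalf : sin (h / 2) ≤ sin θ :=
    sin_le_sin_of_le_of_le_pi_div_two (by linarith [pi_pos]) hθ (by linarith)
  calc sin (θ + h) = sin θ * cos h + cos θ * sin h := sin_add θ h
    _ ≤ sin θ + sin h := add_le_add (mul_le_of_le_one_right hsinθ (cos_le_one h))
          (mul_le_of_le_one_left hsinh (cos_le_one θ))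
    _ ≤ sin θ + 2 * sin (h / 2) :=
          add_le_add_right (sin_le_two_mul_sin_half
            (sin_nonneg_of_nonneg_of_le_pi (by linarith) (by linarith))) _
    _ ≤ 3 * sin θ := by linarith

theorem chebyshev_node_ratio_general
    (n i : ℕ) (hi1 : n < 2 * i) (hi2 : i < n) :
    -Real.cos ((i + 1) * Real.pi / n) ≤ 3 * (-Real.cos (i * Real.pi / n)) := by
  have hn : (0 : ℝ) < n := by exact_mod_cast (show 0 < n by omega)
  have hni : (n : ℝ) + 1 ≤ 2 * i := by exact_mod_cast hi1
  have hin : (i : ℝ) ≤ n := by exact_mod_cast hi2.le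
  set θ := i * π / n - π / 2 with hθ
  have hx_i : -cos (i * π / n) = sin θ := (sin_sub_pi_div_two _).symm
  have hx_succ : -cos ((i + 1) * π / n) = sin (θ + π / n) := by
    rw [← sin_sub_pi_div_two, hθ]; ring_nf
  rw [hx_i, hx_succ]
  apply sin_add_le_three_mul_sin (by positivity)
  · have h2θ : 2 * θ - π / n = (2 * i - n - 1) * π / n := by rw [hθ]; field_simp
    have : 0 ≤ (2 * i - n - 1) * π / n := div_nonneg (mul_nonneg (by linarith) pi_pos.le) hn.le
    linarith
  · have : i * π / n ≤ π := by rw [div_le_iff₀ hn]; nlinarith [pi_pos]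
    linarith [hθ]

/-- For the Chebyshev points of the second kind `x_j = -cos(jπ/n)` and
`n/2 < i < n`, one has `x_{i+1} ≤ 3·x_i`. -/
theorem chebyshev_node_ratio
    (n i : ℕ) (hn : 2 ≤ n) (hi1 : n < 2 * i) (hi2 : i < n) :
    -Real.cos ((i + 1) * Real.pi / n) ≤ 3 * (-Real.cos (i * Real.pi / n)) :=
  chebyshev_node_ratio_general n i hi1 hi2
end
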